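/- arXiv:2506.22214 — 8 statements merged into one kernel-verified Lean document; each statement's English description precedes it below -/
import Mathlib

section
/- Let G = (V,E) be a 5-regular, 3-sparse graph in which every k-set with k = 6 (i.e., every X with |X| ≥ 3 and i(X) = 3|X| - 6) induces a copy of K_3. Then for every 7-set X ⊂ V with |X| ≥ 5, every vertex v ∈ X has at least 3 neighbours in X. -/
open Finset

variable {V : Type*} [Fintype V] [DecidableEq V]

/-- `i(X)`: the number of edges of `G` with both endpoints in `X`. -/
def edgesWithin (G : SimpleGraph V) [DecidableRel G.Adj] (X : Finset V) : ℕ :=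
  ((X ×ˢ X).filter fun p => G.Adj p.1 p.2).card / 2

/-- `d(X,Y)`: the number of edges of `G` with one endpoint in `X \ Y` and the other in `Y \ X`. -/
def edgesBetween (G : SimpleGraph V) [DecidableRel G.Adj] (X Y : Finset V) : ℕ :=
  (((X \ Y) ×ˢ (Y \ X)).filter fun p => G.Adj p.1 p.2).card

/-- `G` is 3-sparse: `i(X) ≤ 3|X| - 6` for all `X` with `|X| ≥ 3`. -/
def Sparse3 (G : SimpleGraph V) [DecidableRel G.Adj] : Prop :=
  ∀ X : Finset V, 3 ≤ X.card → edgesWithin G X + 6 ≤ 3 * X.card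

/-- The set of common neighbours of `u` and `v`. -/
def commonNbrs (G : SimpleGraph V) [DecidableRel G.Adj] (u v : V) : Finset V :=
  Finset.univ.filter fun t => G.Adj u t ∧ G.Adj v t

lemma pairsCard_eq_sum (G : SimpleGraph V) [DecidableRel G.Adj] (X : Finset V) :
    ((X ×ˢ X).filter fun p => G.Adj p.1 p.2).card
      = ∑ x ∈ X, (X.filter fun u => G.Adj x u).card := by
  rw [Finset.card_eq_sum_card_fiberwise
    (f := Prod.fst) (t := X)
    (fun p hp => (Finset.mem_product.1 (Finset.mem_filter.1 hp).1).1)]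
  refine Finset.sum_congr rfl fun x hx => ?_
  refine Finset.card_bij' (fun p _ => p.2) (fun u _ => (x, u)) ?_ ?_ ?_ ?_
  · intro p hp
    rw [Finset.mem_filter] at hp
    obtain ⟨hp1, hp2⟩ := hp
    rw [Finset.mem_filter, Finset.mem_product] at hp1
    exact Finset.mem_filter.2 ⟨hp1.1.2, hp2 ▸ hp1.2⟩
  · intro u hu
    rw [Finset.mem_filter] at hu
    exact Finset.mem_filter.2 ⟨Finset.mem_filter.2 ⟨Finset.mem_product.2 ⟨hx, hu.1⟩, hu.2⟩, rfl⟩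
  · intro p hp
    rw [Finset.mem_filter] at hp
    exact Prod.ext hp.2.symm rfl
  · intro u hu; rfl

lemma pairsCard_erase (G : SimpleGraph V) [DecidableRel G.Adj] (X : Finset V) (v : V)
    (hv : v ∈ X) :
    ((X ×ˢ X).filter fun p => G.Adj p.1 p.2).card
      = (((X.erase v) ×ˢ (X.erase v)).filter fun p => G.Adj p.1 p.2).card
        + 2 * (X.filter fun u => G.Adj v u).card := by
  rw [pairsCard_eq_sum, pairsCard_eq_sum]
  rw [← Finset.add_sum_erase X _ hv]
  have h1 : ∀ x ∈ X.erase v,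
      (X.filter fun u => G.Adj x u).card
        = ((X.erase v).filter fun u => G.Adj x u).card + (if G.Adj x v then 1 else 0) := by
    intro x _
    have he : ((X.erase v).filter fun u => G.Adj x u)
        = (X.filter fun u => G.Adj x u).erase v := by
      ext u
      simp only [Finset.mem_filter, Finset.mem_erase]
      tauto
    rw [he]
    split_ifs with h
    · have hm : v ∈ X.filter fun u => G.Adj x u := Finset.mem_filter.2 ⟨hv, h⟩
      rw [Finset.card_erase_of_mem hm]
      have : 1 ≤ (X.filter fun u => G.Adj x u).card := Finset.card_pos.2 ⟨v, hm⟩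
      omega
    · rw [Finset.erase_eq_of_notMem (fun hc => h (Finset.mem_filter.1 hc).2), add_zero]
  rw [Finset.sum_congr rfl h1, Finset.sum_add_distrib]
  have hb : (∑ x ∈ X.erase v, if G.Adj x v then (1:ℕ) else 0)
      = ((X.erase v).filter fun x => G.Adj x v).card := by
    rw [← Nat.cast_id (((X.erase v).filter fun x => G.Adj x v).card), ← Finset.sum_boole]
  rw [hb]
  have h2 : ((X.erase v).filter fun x => G.Adj x v).card
      = (X.filter fun u => G.Adj v u).card := by
    congr 1
    ext u
    simp only [Finset.mem_filter, Finset.mem_erase]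
    constructor
    · rintro ⟨⟨_, hu⟩, ha⟩; exact ⟨hu, ha.symm⟩
    · rintro ⟨hu, ha⟩; exact ⟨⟨G.ne_of_adj ha.symm, hu⟩, ha.symm⟩
  rw [h2]
  ring

lemma edgesWithin_erase (G : SimpleGraph V) [DecidableRel G.Adj] (X : Finset V) (v : V)
    (hv : v ∈ X) :
    edgesWithin G X = edgesWithin G (X.erase v) + (X.filter fun u => G.Adj v u).card := by
  unfold edgesWithin
  rw [pairsCard_erase G X v hv,
    Nat.add_mul_div_left _ _ (by norm_num : 0 < 2)]

theorem stmt2 (G : SimpleGraph V) [DecidableRel G.Adj]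
    (hreg : ∀ v, G.degree v = 5) (hsp : Sparse3 G)
    (h6 : ∀ X : Finset V, 3 ≤ X.card → edgesWithin G X + 6 = 3 * X.card →
      X.card = 3 ∧ ∀ u ∈ X, ∀ v ∈ X, u ≠ v → G.Adj u v) :
    ∀ X : Finset V, 5 ≤ X.card → edgesWithin G X + 7 = 3 * X.card →
      ∀ v ∈ X, 3 ≤ (X.filter fun u => G.Adj v u).card := by
  intro X hX5 hX7 v hv
  by_contra hlt
  push_neg at hlt
  set d := (X.filter fun u => G.Adj v u).card with hd
  have hcard : (X.erase v).card = X.card - 1 := Finset.card_erase_of_mem hv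
  have hcard' : 4 ≤ (X.erase v).card := by omega
  have hsplit := edgesWithin_erase G X v hv
  have hsp' := hsp (X.erase v) (by omega)
  -- From hX7: edgesWithin X' + d + 7 = 3 * (card X' + 1)
  have key : edgesWithin G (X.erase v) + d + 7 = 3 * ((X.erase v).card + 1) := by
    rw [← hsplit]
    have : (X.erase v).card + 1 = X.card := by omega
    rw [this]; exact hX7
  have hd2 : d = 2 := by omega
  have h6' := h6 (X.erase v) (by omega) (by omega)
  omega
end

section
/- Let G = (V,E) be a connected, 5-regular, 3-sparse graph in which every 6-set induces a copy of K_3. Suppose X, Y ⊂ V are sets with at least 6 vertices each, each being a 7-set or an 8-set, such that G[X ∩ Y] is isomorphic to K_3. Then G contains a subgraph isomorphic to K_4 minus an edge. -/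
open Finset

variable {V : Type*} [Fintype V] [DecidableEq V]

def crossE (G : SimpleGraph V) [DecidableRel G.Adj] (A B : Finset V) : ℕ :=
  ((A ×ˢ B).filter fun p => G.Adj p.1 p.2).card

lemma crossE_swap (G : SimpleGraph V) [DecidableRel G.Adj] (A B : Finset V) :
    crossE G A B = crossE G B A := by
  unfold crossE
  refine Finset.card_bij' (fun p _ => p.swap) (fun p _ => p.swap) ?_ ?_ (fun _ _ => rfl) (fun _ _ => rfl)
  · rintro ⟨x, y⟩ h
    simp only [mem_filter, mem_product] at h ⊢
    exact ⟨⟨h.1.2, h.1.1⟩, h.2.symm⟩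
  · rintro ⟨x, y⟩ h
    simp only [mem_filter, mem_product] at h ⊢
    exact ⟨⟨h.1.2, h.1.1⟩, h.2.symm⟩

lemma two_mul_edgesWithin (G : SimpleGraph V) [DecidableRel G.Adj] (S : Finset V) :
    2 * (((S ×ˢ S).filter fun p => G.Adj p.1 p.2).card / 2)
      = ((S ×ˢ S).filter fun p => G.Adj p.1 p.2).card := by
  apply Nat.two_mul_div_two_of_even
  classical
  set e := Fintype.equivFin V
  set s := (S ×ˢ S).filter fun p => G.Adj p.1 p.2 with hs
  have hsplit := Finset.card_filter_add_card_filter_not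
    (s := s) (p := fun p => e p.1 < e p.2)
  have hcc : (s.filter fun p => ¬ e p.1 < e p.2).card
      = (s.filter fun p => e p.1 < e p.2).card := by
    refine Finset.card_bij' (fun p _ => p.swap) (fun p _ => p.swap) ?_ ?_ (fun _ _ => rfl) (fun _ _ => rfl)
    · rintro ⟨x, y⟩ h
      simp only [hs, mem_filter, mem_product, Prod.swap] at h ⊢
      refine ⟨⟨⟨h.1.1.2, h.1.1.1⟩, h.1.2.symm⟩, ?_⟩
      have hne : e y ≠ e x := fun hxy => h.1.2.symm.ne (e.injective hxy)
      omega
    · rintro ⟨x, y⟩ h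
      simp only [hs, mem_filter, mem_product, Prod.swap] at h ⊢
      exact ⟨⟨⟨h.1.1.2, h.1.1.1⟩, h.1.2.symm⟩, by omega⟩
  exact ⟨(s.filter fun p => e p.1 < e p.2).card, by omega⟩

lemma crossE_fiber (G : SimpleGraph V) [DecidableRel G.Adj] (T S : Finset V) :
    crossE G T S = ∑ t ∈ T, (S.filter (G.Adj t)).card := by
  unfold crossE
  rw [Finset.card_eq_sum_card_fiberwise (f := Prod.fst) (t := T)
    (fun p hp => (Finset.mem_product.1 (Finset.mem_filter.1 hp).1).1)]
  refine Finset.sum_congr rfl fun t ht => ?_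
  refine Finset.card_bij' (fun p _ => p.2) (fun y _ => (t, y)) ?_ ?_ ?_ (fun _ _ => rfl)
  · rintro ⟨x, y⟩ h
    simp only [mem_filter, mem_product] at h ⊢
    obtain ⟨⟨⟨_, hy⟩, hadj⟩, hx⟩ := h
    subst hx
    exact ⟨hy, hadj⟩
  · intro y h
    simp only [mem_filter, mem_product] at h ⊢
    exact ⟨⟨⟨ht, h.1⟩, h.2⟩, trivial⟩
  · rintro ⟨x, y⟩ h
    simp only [mem_filter] at h
    simp [h.2]

lemma crossE_union_left (G : SimpleGraph V) [DecidableRel G.Adj] {A B : Finset V} (S : Finset V)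
    (h : Disjoint A B) : crossE G (A ∪ B) S = crossE G A S + crossE G B S := by
  rw [crossE_fiber, crossE_fiber, crossE_fiber, Finset.sum_union h]

lemma crossE_union_right (G : SimpleGraph V) [DecidableRel G.Adj] {A B : Finset V} (S : Finset V)
    (h : Disjoint A B) : crossE G S (A ∪ B) = crossE G S A + crossE G S B := by
  rw [crossE_swap, crossE_union_left G S h, crossE_swap, crossE_swap G B S]

lemma crossE_mono_right (G : SimpleGraph V) [DecidableRel G.Adj] {A B : Finset V} (S : Finset V)
    (h : A ⊆ B) : crossE G S A ≤ crossE G S B :=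
  Finset.card_le_card (Finset.filter_subset_filter _
    (Finset.product_subset_product (Finset.Subset.refl _) h))

lemma two_mul_edgesWithin' (G : SimpleGraph V) [DecidableRel G.Adj] (S : Finset V) :
    2 * edgesWithin G S = crossE G S S :=
  two_mul_edgesWithin G S

lemma triangle_nbr (G : SimpleGraph V) [DecidableRel G.Adj] {T : Finset V} (hT : T.card = 3)
    (hadj : ∀ u ∈ T, ∀ v ∈ T, u ≠ v → G.Adj u v) {t : V} (ht : t ∈ T) :
    (T.filter (G.Adj t)).card = 2 := by
  have : T.filter (G.Adj t) = T.erase t := by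
    ext u
    simp only [mem_filter, mem_erase]
    constructor
    · exact fun ⟨hu, hadju⟩ => ⟨(G.ne_of_adj hadju).symm, hu⟩
    · exact fun ⟨hne, hu⟩ => ⟨hu, hadj t ht u hu (Ne.symm hne)⟩
  rw [this, Finset.card_erase_of_mem ht, hT]

lemma triangle_six (G : SimpleGraph V) [DecidableRel G.Adj] {T : Finset V} (hT : T.card = 3)
    (hadj : ∀ u ∈ T, ∀ v ∈ T, u ≠ v → G.Adj u v) :
    crossE G T T = 6 := by
  rw [crossE_fiber]
  rw [Finset.sum_congr rfl fun t ht => triangle_nbr G hT hadj ht]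
  simp [hT]

lemma triangle_out (G : SimpleGraph V) [DecidableRel G.Adj] (hreg : ∀ v, G.degree v = 5)
    {T : Finset V} (hT : T.card = 3) (hadj : ∀ u ∈ T, ∀ v ∈ T, u ≠ v → G.Adj u v) :
    crossE G T (univ \ T) = 9 := by
  rw [crossE_fiber]
  have key : ∀ t ∈ T, ((univ \ T).filter (G.Adj t)).card = 3 := by
    intro t ht
    have h5 : (univ.filter (G.Adj t)).card = 5 := by
      have : univ.filter (G.Adj t) = G.neighborFinset t := by
        ext u; simp [SimpleGraph.mem_neighborFinset]
      rw [this]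
      exact hreg t
    have h2 := triangle_nbr G hT hadj ht
    have hu : (univ : Finset V) = T ∪ (univ \ T) :=
      (Finset.union_sdiff_of_subset (Finset.subset_univ T)).symm
    have hsplit : (univ.filter (G.Adj t)).card
        = (T.filter (G.Adj t)).card + ((univ \ T).filter (G.Adj t)).card := by
      conv_lhs => rw [hu]
      rw [Finset.filter_union]
      exact Finset.card_union_of_disjoint
        (Finset.disjoint_filter_filter Finset.disjoint_sdiff)
    omega
  rw [Finset.sum_congr rfl key]
  simp [hT]

lemma pigeon (G : SimpleGraph V) [DecidableRel G.Adj] {T A : Finset V} (hT : T.card = 3)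
    (hadj : ∀ u ∈ T, ∀ v ∈ T, u ≠ v → G.Adj u v) (hdisj : Disjoint T A)
    (hA : A.card = 3) (hc : 4 ≤ crossE G T A) :
    ∃ a b c d : V, a ≠ b ∧ a ≠ c ∧ a ≠ d ∧ b ≠ c ∧ b ≠ d ∧ c ≠ d ∧
      G.Adj a b ∧ G.Adj a c ∧ G.Adj a d ∧ G.Adj b c ∧ G.Adj b d := by
  rw [crossE_swap, crossE_fiber] at hc
  have hd : ∃ d ∈ A, 2 ≤ (T.filter (G.Adj d)).card := by
    by_contra h
    push_neg at h
    have : ∑ d ∈ A, (T.filter (G.Adj d)).card ≤ ∑ _d ∈ A, 1 :=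
      Finset.sum_le_sum fun d hdA => by have := h d hdA; omega
    simp [hA] at this
    omega
  obtain ⟨d, hdA, hd2⟩ := hd
  obtain ⟨t1, ht1, t2, ht2, h12⟩ := Finset.one_lt_card.1 (by omega : 1 < (T.filter (G.Adj d)).card)
  simp only [mem_filter] at ht1 ht2
  have ht2T : t2 ∈ T.erase t1 := Finset.mem_erase.2 ⟨Ne.symm h12, ht2.1⟩
  have hcard1 : ((T.erase t1).erase t2).card = 1 := by
    rw [Finset.card_erase_of_mem ht2T, Finset.card_erase_of_mem ht1.1, hT]
  obtain ⟨t3, ht3⟩ := Finset.card_pos.1 (by omega : 0 < ((T.erase t1).erase t2).card)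
  have ht3' := Finset.mem_erase.1 ht3
  have ht3'' := Finset.mem_erase.1 ht3'.2
  have ht3T : t3 ∈ T := ht3''.2
  have hdT : d ∉ T := fun hdT => (Finset.disjoint_left.1 hdisj hdT) hdA
  refine ⟨t1, t2, t3, d, h12, Ne.symm ht3''.1, fun h => hdT (h ▸ ht1.1), Ne.symm ht3'.1,
    fun h => hdT (h ▸ ht2.1), fun h => hdT (h ▸ ht3T),
    hadj t1 ht1.1 t2 ht2.1 h12, hadj t1 ht1.1 t3 ht3T (Ne.symm ht3''.1),
    ht1.2.symm, hadj t2 ht2.1 t3 ht3T (Ne.symm ht3'.1), ht2.2.symm⟩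


theorem stmt3 (G : SimpleGraph V) [DecidableRel G.Adj]
    (hconn : G.Connected) (hreg : ∀ v, G.degree v = 5) (hsp : Sparse3 G)
    (h6 : ∀ X : Finset V, 3 ≤ X.card → edgesWithin G X + 6 = 3 * X.card →
      X.card = 3 ∧ ∀ u ∈ X, ∀ v ∈ X, u ≠ v → G.Adj u v)
    (X Y : Finset V) (hX6 : 6 ≤ X.card) (hY6 : 6 ≤ Y.card)
    (hX : edgesWithin G X + 7 = 3 * X.card ∨ edgesWithin G X + 8 = 3 * X.card)
    (hY : edgesWithin G Y + 7 = 3 * Y.card ∨ edgesWithin G Y + 8 = 3 * Y.card)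
    (hint : (X ∩ Y).card = 3 ∧ ∀ u ∈ X ∩ Y, ∀ v ∈ X ∩ Y, u ≠ v → G.Adj u v) :
    ∃ a b c d : V, a ≠ b ∧ a ≠ c ∧ a ≠ d ∧ b ≠ c ∧ b ≠ d ∧ c ≠ d ∧
      G.Adj a b ∧ G.Adj a c ∧ G.Adj a d ∧ G.Adj b c ∧ G.Adj b d := by
  obtain ⟨hT3, hTadj⟩ := hint
  set T := X ∩ Y with hTdef
  have hTX : T ⊆ X := Finset.inter_subset_left
  have hTY : T ⊆ Y := Finset.inter_subset_right
  set A := X \ T with hAdef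
  set B := Y \ T with hBdef
  have hXeq : T ∪ A = X := Finset.union_sdiff_of_subset hTX
  have hYeq : T ∪ B = Y := Finset.union_sdiff_of_subset hTY
  have hAcard : A.card + 3 = X.card := by
    have h1 : A.card = X.card - T.card := Finset.card_sdiff_of_subset hTX
    have h2 := Finset.card_le_card hTX
    omega
  have hBcard : B.card + 3 = Y.card := by
    have h1 : B.card = Y.card - T.card := Finset.card_sdiff_of_subset hTY
    have h2 := Finset.card_le_card hTY
    omega
  have hdisTA : Disjoint T A := Finset.disjoint_sdiff
  have hdisTB : Disjoint T B := Finset.disjoint_sdiff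
  have hdisAB : Disjoint A B := by
    rw [Finset.disjoint_left]
    intro a haA haB
    have h1 := Finset.mem_sdiff.1 haA
    have h2 := Finset.mem_sdiff.1 haB
    exact h1.2 (Finset.mem_inter.2 ⟨h1.1, h2.1⟩)
  have split : ∀ C : Finset V, Disjoint T C →
      crossE G (T ∪ C) (T ∪ C) = 6 + crossE G C C + 2 * crossE G T C := by
    intro C hdis
    rw [crossE_union_left G _ hdis, crossE_union_right G _ hdis, crossE_union_right G _ hdis,
      triangle_six G hT3 hTadj, crossE_swap G C T]
    ring
  have eqX : edgesWithin G X = 3 + edgesWithin G A + crossE G T A := by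
    have h1 := two_mul_edgesWithin' G X
    have h2 := two_mul_edgesWithin' G A
    have h3 := split A hdisTA
    rw [hXeq] at h3
    omega
  have eqY : edgesWithin G Y = 3 + edgesWithin G B + crossE G T B := by
    have h1 := two_mul_edgesWithin' G Y
    have h2 := two_mul_edgesWithin' G B
    have h3 := split B hdisTB
    rw [hYeq] at h3
    omega
  have bound9 : crossE G T A + crossE G T B ≤ 9 := by
    have hsub : A ∪ B ⊆ univ \ T := by
      intro a ha
      rcases Finset.mem_union.1 ha with h | h
      · exact Finset.mem_sdiff.2 ⟨Finset.mem_univ a, (Finset.mem_sdiff.1 h).2⟩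
      · exact Finset.mem_sdiff.2 ⟨Finset.mem_univ a, (Finset.mem_sdiff.1 h).2⟩
    calc crossE G T A + crossE G T B = crossE G T (A ∪ B) :=
          (crossE_union_right G T hdisAB).symm
      _ ≤ crossE G T (univ \ T) := crossE_mono_right G T hsub
      _ = 9 := triangle_out G hreg hT3 hTadj
  have hX' : 3 * X.card ≤ edgesWithin G X + 8 := by rcases hX with h | h <;> omega
  have hY' : 3 * Y.card ≤ edgesWithin G Y + 8 := by rcases hY with h | h <;> omega
  by_cases hx6 : X.card = 6
  · have hA3 : A.card = 3 := by omega
    have hspA := hsp A (by omega)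
    exact pigeon G hT3 hTadj hdisTA hA3 (by omega)
  · by_cases hy6 : Y.card = 6
    · have hB3 : B.card = 3 := by omega
      have hspB := hsp B (by omega)
      exact pigeon G hT3 hTadj hdisTB hB3 (by omega)
    · exfalso
      have hspA : edgesWithin G A + 7 ≤ 3 * A.card := by
        have h1 := hsp A (by omega)
        rcases Nat.lt_or_ge (edgesWithin G A + 6) (3 * A.card) with h | h
        · omega
        · exfalso
          have heq : edgesWithin G A + 6 = 3 * A.card := by omega
          have := (h6 A (by omega) heq).1
          omega
      have hspB : edgesWithin G B + 7 ≤ 3 * B.card := by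
        have h1 := hsp B (by omega)
        rcases Nat.lt_or_ge (edgesWithin G B + 6) (3 * B.card) with h | h
        · omega
        · exfalso
          have heq : edgesWithin G B + 6 = 3 * B.card := by omega
          have := (h6 B (by omega) heq).1
          omega
      omega
end

section
/- Let G = (V,E) be a 3-sparse graph containing no 6-set, and let X ⊂ V with |X| ≥ 5 satisfy i(X) = 3|X| - k for some 7 ≤ k ≤ 11. Then the induced subgraph G[X] is essentially (12 - k)-edge-connected; that is, every edge cutset of G[X] of size less than 12 - k isolates a single vertex. -/
open Finset

variable {V : Type*} [Fintype V] [DecidableEq V]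

set_option linter.unusedSectionVars false in
lemma even_adj_card (G : SimpleGraph V) [DecidableRel G.Adj] (S : Finset V) :
    Even ((S ×ˢ S).filter fun p => G.Adj p.1 p.2).card := by
  classical
  letI : LinearOrder V := LinearOrder.lift' (Fintype.equivFin V) (Fintype.equivFin V).injective
  set s := (S ×ˢ S).filter fun p => G.Adj p.1 p.2 with hs
  have hsplit := Finset.card_filter_add_card_filter_not
    (s := s) (p := fun p : V × V => p.1 < p.2)
  have hbij : (s.filter fun p : V × V => p.1 < p.2).card
      = (s.filter fun p : V × V => ¬ p.1 < p.2).card := by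
    apply Finset.card_bij (fun p _ => Prod.swap p)
    · rintro ⟨a,b⟩ hp
      simp only [hs, mem_filter, mem_product] at hp ⊢
      exact ⟨⟨⟨hp.1.1.2, hp.1.1.1⟩, hp.1.2.symm⟩, not_lt.2 hp.2.le⟩
    · rintro ⟨a,b⟩ _ ⟨c,d⟩ _ h
      obtain ⟨h1, h2⟩ := Prod.ext_iff.1 h; exact Prod.ext h2 h1
    · rintro ⟨a,b⟩ hp
      refine ⟨(b,a), ?_, rfl⟩
      simp only [hs, mem_filter, mem_product] at hp ⊢
      have hne : b ≠ a := fun h => (hp.1.2.ne h.symm).elim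
      exact ⟨⟨⟨hp.1.1.2, hp.1.1.1⟩, hp.1.2.symm⟩, lt_of_le_of_ne (not_lt.1 hp.2) hne⟩
  exact ⟨(s.filter fun p : V × V => p.1 < p.2).card, by omega⟩

set_option linter.unusedSectionVars false in
lemma cross_symm (G : SimpleGraph V) [DecidableRel G.Adj] (A B : Finset V) :
    ((A ×ˢ B).filter fun p => G.Adj p.1 p.2).card
      = ((B ×ˢ A).filter fun p => G.Adj p.1 p.2).card := by
  apply Finset.card_bij (fun p _ => Prod.swap p)
  · rintro ⟨a,b⟩ hp
    simp only [mem_filter, mem_product] at hp ⊢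
    exact ⟨⟨hp.1.2, hp.1.1⟩, hp.2.symm⟩
  · rintro ⟨a,b⟩ _ ⟨c,d⟩ _ h
    obtain ⟨h1, h2⟩ := Prod.ext_iff.1 h; exact Prod.ext h2 h1
  · rintro ⟨a,b⟩ hp
    refine ⟨(b,a), ?_, rfl⟩
    simp only [mem_filter, mem_product] at hp ⊢
    exact ⟨⟨hp.1.2, hp.1.1⟩, hp.2.symm⟩

lemma split_within (G : SimpleGraph V) [DecidableRel G.Adj] {A B : Finset V}
    (hd : Disjoint A B) :
    edgesWithin G (A ∪ B) = edgesWithin G A + edgesWithin G B + edgesBetween G A B := by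
  classical
  have hprod : (A ∪ B) ×ˢ (A ∪ B) = (A ×ˢ A ∪ B ×ˢ B) ∪ (A ×ˢ B ∪ B ×ˢ A) := by
    ext ⟨a, b⟩
    simp only [mem_product, mem_union]
    tauto
  have key : ((A ∪ B) ×ˢ (A ∪ B)).filter (fun p => G.Adj p.1 p.2) =
      (((A ×ˢ A).filter fun p => G.Adj p.1 p.2) ∪ ((B ×ˢ B).filter fun p => G.Adj p.1 p.2)) ∪
      (((A ×ˢ B).filter fun p => G.Adj p.1 p.2) ∪ ((B ×ˢ A).filter fun p => G.Adj p.1 p.2)) := by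
    rw [hprod, filter_union, filter_union, filter_union]
  have hdAB : ∀ x, x ∈ A → x ∉ B := fun x hx hx' =>
    (Finset.disjoint_left.1 hd hx hx')
  have d1 : Disjoint ((A ×ˢ A).filter fun p => G.Adj p.1 p.2)
      ((B ×ˢ B).filter fun p => G.Adj p.1 p.2) := by
    rw [Finset.disjoint_left]
    rintro ⟨a,b⟩ h1 h2
    simp only [mem_filter, mem_product] at h1 h2
    exact hdAB a h1.1.1 h2.1.1
  have d2 : Disjoint ((A ×ˢ B).filter fun p => G.Adj p.1 p.2)
      ((B ×ˢ A).filter fun p => G.Adj p.1 p.2) := by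
    rw [Finset.disjoint_left]
    rintro ⟨a,b⟩ h1 h2
    simp only [mem_filter, mem_product] at h1 h2
    exact hdAB a h1.1.1 h2.1.1
  have d3 : Disjoint (((A ×ˢ A).filter fun p => G.Adj p.1 p.2) ∪
      ((B ×ˢ B).filter fun p => G.Adj p.1 p.2))
      (((A ×ˢ B).filter fun p => G.Adj p.1 p.2) ∪
      ((B ×ˢ A).filter fun p => G.Adj p.1 p.2)) := by
    rw [Finset.disjoint_left]
    rintro ⟨a,b⟩ h1 h2
    simp only [mem_union, mem_filter, mem_product] at h1 h2
    rcases h1 with h1 | h1 <;> rcases h2 with h2 | h2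
    · exact hdAB b h1.1.2 h2.1.2
    · exact hdAB a h1.1.1 h2.1.1
    · exact hdAB a h2.1.1 h1.1.1
    · exact hdAB b h2.1.2 h1.1.2
  have hcard : (((A ∪ B) ×ˢ (A ∪ B)).filter fun p => G.Adj p.1 p.2).card =
      ((A ×ˢ A).filter fun p => G.Adj p.1 p.2).card +
      ((B ×ˢ B).filter fun p => G.Adj p.1 p.2).card +
      2 * ((A ×ˢ B).filter fun p => G.Adj p.1 p.2).card := by
    rw [key, Finset.card_union_of_disjoint d3, Finset.card_union_of_disjoint d1,
      Finset.card_union_of_disjoint d2, ← cross_symm G A B]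
    ring
  have hAB : edgesBetween G A B = ((A ×ˢ B).filter fun p => G.Adj p.1 p.2).card := by
    unfold edgesBetween
    rw [Finset.sdiff_eq_self_of_disjoint hd, Finset.sdiff_eq_self_of_disjoint hd.symm]
  obtain ⟨a, ha⟩ := even_adj_card G A
  obtain ⟨b, hb⟩ := even_adj_card G B
  unfold edgesWithin
  rw [hAB]
  omega

set_option linter.unusedSectionVars false in
lemma within_two (G : SimpleGraph V) [DecidableRel G.Adj] {S : Finset V}
    (h2 : S.card = 2) : edgesWithin G S ≤ 1 := by
  classical
  obtain ⟨a, b, hab, rfl⟩ := Finset.card_eq_two.1 h2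
  have hsub : (({a, b} : Finset V) ×ˢ {a, b}).filter (fun p => G.Adj p.1 p.2)
      ⊆ {(a, b), (b, a)} := by
    rintro ⟨x, y⟩ hp
    simp only [mem_filter, mem_product, mem_insert, mem_singleton, Prod.mk.injEq] at hp ⊢
    obtain ⟨⟨hx, hy⟩, hadj⟩ := hp
    rcases hx with rfl | rfl <;> rcases hy with rfl | rfl
    · exact absurd rfl hadj.ne
    · exact Or.inl ⟨rfl, rfl⟩
    · exact Or.inr ⟨rfl, rfl⟩
    · exact absurd rfl hadj.ne
  have := Finset.card_le_card hsub
  have h2' : ({((a : V), b), (b, a)} : Finset (V × V)).card ≤ 2 :=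
    Finset.card_insert_le _ _ |>.trans (by simp)
  unfold edgesWithin
  omega

theorem stmt4 (G : SimpleGraph V) [DecidableRel G.Adj] (hsp : Sparse3 G)
    (h6 : ¬ ∃ X : Finset V, 3 ≤ X.card ∧ edgesWithin G X + 6 = 3 * X.card)
    (X : Finset V) (hX : 5 ≤ X.card) (k : ℕ) (hk7 : 7 ≤ k) (hk11 : k ≤ 11)
    (hkset : edgesWithin G X + k = 3 * X.card) :
    ∀ A B : Finset V, A ∪ B = X → Disjoint A B → A.Nonempty → B.Nonempty →
      edgesBetween G A B < 12 - k → A.card = 1 ∨ B.card = 1 := by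
  intro A B hunion hdisj hA hB hcut
  by_contra hcon
  push_neg at hcon
  have hA2 : 2 ≤ A.card := by
    have h1 := Finset.card_pos.2 hA
    have h2 := hcon.1
    omega
  have hB2 : 2 ≤ B.card := by
    have h1 := Finset.card_pos.2 hB
    have h2 := hcon.2
    omega
  have hcards : A.card + B.card = X.card := by
    rw [← hunion, Finset.card_union_of_disjoint hdisj]
  have hsplit : edgesWithin G X = edgesWithin G A + edgesWithin G B + edgesBetween G A B := by
    rw [← hunion]; exact split_within G hdisj
  -- bounds
  have boundS : ∀ S : Finset V, 2 ≤ S.card → edgesWithin G S + 5 ≤ 3 * S.card := by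
    intro S hS
    rcases Nat.lt_or_ge S.card 3 with h | h
    · have : S.card = 2 := by omega
      have := within_two G this
      omega
    · have h1 := hsp S h
      have h2 : edgesWithin G S + 6 ≠ 3 * S.card := fun h => h6 ⟨S, ‹3 ≤ S.card›, h⟩
      omega
  have bound3 : ∀ S : Finset V, 3 ≤ S.card → edgesWithin G S + 7 ≤ 3 * S.card := by
    intro S h
    have h1 := hsp S h
    have h2 : edgesWithin G S + 6 ≠ 3 * S.card := fun h => h6 ⟨S, ‹3 ≤ S.card›, h⟩
    omega
  have h3 : 3 ≤ A.card ∨ 3 ≤ B.card := by omega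
  rcases h3 with h3 | h3
  · have hbA := bound3 A h3
    have hbB := boundS B hB2
    omega
  · have hbA := boundS A hA2
    have hbB := bound3 B h3
    omega
end

section
/- Let G = (V,E) be a 3-sparse, 5-regular graph and let X, Y ⊂ V be 8-sets (i(X) = 3|X| - 8, i(Y) = 3|Y| - 8) with |X ∩ Y| ≥ 3. Then d(X,Y) ≤ 4, and X ∪ Y is an m-set and X ∩ Y is an n-set with m, n ≥ 6 and m + n = 16 - d(X,Y). -/
/-
Counting ordered pairs of adjacent vertices shows that `i` is supermodular with defect exactly `d`:
`i(X ∪ Y) + i(X ∩ Y) = i(X) + i(Y) + d(X, Y)`. If `X ∪ Y` is an `m`-set and `X ∩ Y` an `n`-set, this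
reads `m + n = 8 + 8 - d(X, Y)`; since `|X ∩ Y| ≥ 3`, sparsity gives `m, n ≥ 6`, and hence `d(X, Y) ≤ 4`.
-/

open Finset

variable {V : Type*} [Fintype V] [DecidableEq V]

namespace SimpleGraph

section

variable {α : Type*} [Fintype α] (G : SimpleGraph α) [DecidableRel G.Adj]

theorem even_card_interedges_self (A : Finset α) : Even #(G.interedges A A) := by
  classical
  let H := ((⊤ : G.Subgraph).induce (A : Set α)).spanningCoe
  have hdarts :
      (univ : Finset H.Dart).map ⟨Dart.toProd, Dart.toProd_injective⟩ = G.interedges A A := by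
    ext p
    simp only [mem_map, mem_univ, true_and, Function.Embedding.coeFn_mk, mem_interedges_iff]
    refine ⟨fun ⟨d, hd⟩ => hd ▸ d.adj, fun hp => ⟨⟨p, hp⟩, rfl⟩⟩
  rw [← hdarts, card_map, card_univ, H.dart_card_eq_twice_card_edges]
  exact even_two_mul _

end

variable (G : SimpleGraph V) [DecidableRel G.Adj]

theorem card_interedges_eq_sum (s t : Finset V) :
    #(G.interedges s t) = ∑ p : V × V, if p.1 ∈ s ∧ p.2 ∈ t ∧ G.Adj p.1 p.2 then 1 else 0 := by
  rw [← card_filter]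
  congr 1
  ext p
  simp [mem_interedges_iff]

theorem card_interedges_union_add_card_interedges_inter (X Y : Finset V) :
    #(G.interedges (X ∪ Y) (X ∪ Y)) + #(G.interedges (X ∩ Y) (X ∩ Y)) =
      #(G.interedges X X) + #(G.interedges Y Y) + 2 * #(G.interedges (X \ Y) (Y \ X)) := by
  have : Std.Symm G.Adj := ⟨fun _ _ h => h.symm⟩
  have hcomm : #(G.interedges (X \ Y) (Y \ X)) = #(G.interedges (Y \ X) (X \ Y)) :=
    Rel.card_interedges_comm _ _
  rw [two_mul]
  nth_rw 2 [hcomm]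
  simp only [card_interedges_eq_sum, ← sum_add_distrib]
  refine sum_congr rfl fun p _ => ?_
  by_cases h1 : p.1 ∈ X <;> by_cases h2 : p.1 ∈ Y <;> by_cases h3 : p.2 ∈ X <;>
    by_cases h4 : p.2 ∈ Y <;> by_cases h5 : G.Adj p.1 p.2 <;> simp [*]

theorem edgesWithin_union_add_edgesWithin_inter (X Y : Finset V) :
    edgesWithin G (X ∪ Y) + edgesWithin G (X ∩ Y) =
      edgesWithin G X + edgesWithin G Y + edgesBetween G X Y := by
  -- `edgesWithin` halves an ordered count by truncating division, hence the parity lemma.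
  have two_mul_edgesWithin (A : Finset V) : 2 * edgesWithin G A = #(G.interedges A A) :=
    Nat.two_mul_div_two_of_even (G.even_card_interedges_self A)
  have := G.card_interedges_union_add_card_interedges_inter X Y
  simp only [← two_mul_edgesWithin] at this
  unfold edgesBetween
  rw [← interedges_def]
  omega

end SimpleGraph

theorem stmt10_general (G : SimpleGraph V) [DecidableRel G.Adj]
    (hsp : Sparse3 G)
    (X Y : Finset V)
    (hX : edgesWithin G X + 8 = 3 * X.card)
    (hY : edgesWithin G Y + 8 = 3 * Y.card)
    (hXY : 3 ≤ (X ∩ Y).card) :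
    edgesBetween G X Y ≤ 4 ∧
    ∃ m n : ℕ, 6 ≤ m ∧ 6 ≤ n ∧ m + n + edgesBetween G X Y = 16 ∧
      edgesWithin G (X ∪ Y) + m = 3 * (X ∪ Y).card ∧
      edgesWithin G (X ∩ Y) + n = 3 * (X ∩ Y).card := by
  have hmod := G.edgesWithin_union_add_edgesWithin_inter X Y
  have hcard := card_union_add_card_inter X Y
  have hU := hsp (X ∪ Y) (hXY.trans (card_le_card inter_subset_union))
  have hI := hsp (X ∩ Y) hXY
  exact ⟨by omega, 3 * #(X ∪ Y) - edgesWithin G (X ∪ Y), 3 * #(X ∩ Y) - edgesWithin G (X ∩ Y),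
    by omega, by omega, by omega, by omega, by omega⟩

theorem stmt10 (G : SimpleGraph V) [DecidableRel G.Adj]
    (hreg : ∀ v, G.degree v = 5) (hsp : Sparse3 G)
    (X Y : Finset V)
    (hX : edgesWithin G X + 8 = 3 * X.card)
    (hY : edgesWithin G Y + 8 = 3 * Y.card)
    (hXY : 3 ≤ (X ∩ Y).card) :
    edgesBetween G X Y ≤ 4 ∧
    ∃ m n : ℕ, 6 ≤ m ∧ 6 ≤ n ∧ m + n + edgesBetween G X Y = 16 ∧
      edgesWithin G (X ∪ Y) + m = 3 * (X ∪ Y).card ∧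
      edgesWithin G (X ∩ Y) + n = 3 * (X ∩ Y).card :=
  stmt10_general G hsp X Y hX hY hXY
end

section
/- Let G = (V,E) be a 3-sparse, 5-regular graph, X ⊂ V a 7-set and Y ⊂ V an 8-set with |X ∩ Y| ≥ 3. Then d(X,Y) ≤ 3, and X ∪ Y is an m-set and X ∩ Y is an n-set with m, n ≥ 6 and m + n = 15 - d(X,Y). -/
open Finset

variable {V : Type*} [Fintype V] [DecidableEq V]

/-- Ordered-pair adjacency count between two finsets. -/
def opc (G : SimpleGraph V) [DecidableRel G.Adj] (S T : Finset V) : ℕ :=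
  ∑ a ∈ S, ∑ b ∈ T, if G.Adj a b then 1 else 0

lemma opc_eq_card (G : SimpleGraph V) [DecidableRel G.Adj] (S T : Finset V) :
    opc G S T = ((S ×ˢ T).filter fun p => G.Adj p.1 p.2).card := by
  rw [Finset.card_filter, Finset.sum_product]; rfl

lemma opc_comm (G : SimpleGraph V) [DecidableRel G.Adj] (S T : Finset V) :
    opc G S T = opc G T S := by
  rw [opc, Finset.sum_comm, opc]
  exact Finset.sum_congr rfl fun a _ => Finset.sum_congr rfl fun b _ => by
    simp [G.adj_comm]

lemma opc_union_left (G : SimpleGraph V) [DecidableRel G.Adj] {A B : Finset V}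
    (h : Disjoint A B) (T : Finset V) : opc G (A ∪ B) T = opc G A T + opc G B T :=
  Finset.sum_union h

lemma opc_union_right (G : SimpleGraph V) [DecidableRel G.Adj] {A B : Finset V}
    (h : Disjoint A B) (S : Finset V) : opc G S (A ∪ B) = opc G S A + opc G S B := by
  rw [opc, opc, opc, ← Finset.sum_add_distrib]
  exact Finset.sum_congr rfl fun a _ => Finset.sum_union h

lemma opc_self_even (G : SimpleGraph V) [DecidableRel G.Adj] (S : Finset V) :
    2 * edgesWithin G S = opc G S S := by
  letI : LinearOrder V := LinearOrder.lift' (Fintype.equivFin V) (Equiv.injective _)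
  rw [edgesWithin, opc_eq_card]
  set s := (S ×ˢ S).filter fun p => G.Adj p.1 p.2 with hs
  have hsplit : s = s.filter (fun p => p.1 < p.2) ∪ s.filter (fun p => p.2 < p.1) := by
    rw [← Finset.filter_or, Finset.filter_true_of_mem]
    intro p hp
    have hadj : G.Adj p.1 p.2 := (Finset.mem_filter.1 hp).2
    exact lt_or_gt_of_ne hadj.ne
  have hdisj : Disjoint (s.filter (fun p => p.1 < p.2)) (s.filter (fun p => p.2 < p.1)) := by
    simp only [Finset.disjoint_left, Finset.mem_filter]
    rintro p ⟨_, h1⟩ ⟨_, h2⟩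
    exact absurd h1 (not_lt_of_gt h2)
  have hcardeq : (s.filter (fun p => p.1 < p.2)).card = (s.filter (fun p => p.2 < p.1)).card := by
    apply Finset.card_bij (fun p _ => Prod.swap p)
    · rintro p hp
      simp only [Finset.mem_filter, hs, Finset.mem_product] at hp ⊢
      exact ⟨⟨⟨hp.1.1.2, hp.1.1.1⟩, hp.1.2.symm⟩, hp.2⟩
    · rintro p _ q _ h
      exact Prod.swap_injective h
    · rintro p hp
      refine ⟨Prod.swap p, ?_, (Prod.swap_swap p).symm⟩
      simp only [Finset.mem_filter, hs, Finset.mem_product] at hp ⊢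
      exact ⟨⟨⟨hp.1.1.2, hp.1.1.1⟩, hp.1.2.symm⟩, hp.2⟩
  have hcard : s.card = (s.filter (fun p => p.1 < p.2)).card + (s.filter (fun p => p.2 < p.1)).card := by
    conv_lhs => rw [hsplit]
    exact Finset.card_union_of_disjoint hdisj
  omega

lemma opc_key (G : SimpleGraph V) [DecidableRel G.Adj] (X Y : Finset V) :
    opc G (X ∪ Y) (X ∪ Y) + opc G (X ∩ Y) (X ∩ Y)
      = opc G X X + opc G Y Y + 2 * opc G (X \ Y) (Y \ X) := by
  set P := X \ Y with hP
  set Q := X ∩ Y with hQ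
  set R := Y \ X with hR
  have hPQ : Disjoint P Q := Finset.disjoint_sdiff_inter X Y
  have hQR : Disjoint Q R := by
    rw [hQ, Finset.inter_comm]
    exact (Finset.disjoint_sdiff_inter Y X).symm
  have hPR : Disjoint P R := by
    exact disjoint_sdiff_sdiff
  have hPQ_R : Disjoint (P ∪ Q) R := Finset.disjoint_union_left.2 ⟨hPR, hQR⟩
  have eX : X = P ∪ Q := (Finset.sdiff_union_inter X Y).symm
  have eY : Y = Q ∪ R := by
    rw [hQ, hR, Finset.inter_comm, Finset.union_comm]
    exact (Finset.sdiff_union_inter Y X).symm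
  have eU : X ∪ Y = (P ∪ Q) ∪ R := by
    rw [eX, eY]
    ext a; simp only [Finset.mem_union]; tauto
  rw [eU]
  rw [opc_union_left G hPQ_R, opc_union_right G hPQ_R, opc_union_right G hPQ_R,
    opc_union_left G hPQ, opc_union_left G hPQ, opc_union_right G hPQ,
    opc_union_right G hPQ, opc_union_right G hPQ]
  conv_rhs => rw [eX, eY]
  rw [opc_union_left G hPQ, opc_union_right G hPQ, opc_union_right G hPQ,
    opc_union_left G hQR, opc_union_right G hQR, opc_union_right G hQR]
  have h1 : opc G R P = opc G P R := opc_comm G R P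
  omega

lemma edgesWithin_key (G : SimpleGraph V) [DecidableRel G.Adj] (X Y : Finset V) :
    edgesWithin G (X ∪ Y) + edgesWithin G (X ∩ Y)
      = edgesWithin G X + edgesWithin G Y + edgesBetween G X Y := by
  have h := opc_key G X Y
  have hU := opc_self_even G (X ∪ Y)
  have hI := opc_self_even G (X ∩ Y)
  have hX := opc_self_even G X
  have hY := opc_self_even G Y
  have hB : edgesBetween G X Y = opc G (X \ Y) (Y \ X) := (opc_eq_card G _ _).symm
  omega

theorem stmt11 (G : SimpleGraph V) [DecidableRel G.Adj]
    (hreg : ∀ v, G.degree v = 5) (hsp : Sparse3 G)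
    (X Y : Finset V)
    (hX : edgesWithin G X + 7 = 3 * X.card)
    (hY : edgesWithin G Y + 8 = 3 * Y.card)
    (hXY : 3 ≤ (X ∩ Y).card) :
    edgesBetween G X Y ≤ 3 ∧
    ∃ m n : ℕ, 6 ≤ m ∧ 6 ≤ n ∧ m + n + edgesBetween G X Y = 15 ∧
      edgesWithin G (X ∪ Y) + m = 3 * (X ∪ Y).card ∧
      edgesWithin G (X ∩ Y) + n = 3 * (X ∩ Y).card := by
  have hkey := edgesWithin_key G X Y
  have hcard := Finset.card_union_add_card_inter X Y
  have hUcard : 3 ≤ (X ∪ Y).card :=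
    le_trans hXY (Finset.card_le_card (Finset.inter_subset_union))
  have hspU := hsp (X ∪ Y) hUcard
  have hspI := hsp (X ∩ Y) hXY
  refine ⟨by omega, 3 * (X ∪ Y).card - edgesWithin G (X ∪ Y),
    3 * (X ∩ Y).card - edgesWithin G (X ∩ Y), by omega, by omega, by omega, by omega, by omega⟩
end

section
/- Let G be a connected, 5-regular, 3-sparse graph that is not isomorphic to K_{6,6} minus a perfect matching. Then G contains either a reducible edge (an edge contained in at least one and at most two triangles) or a reducible vertex-pair (two non-adjacent vertices having at least one and at most three common neighbours). -/
open Finset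

variable {V : Type*} [Fintype V] [DecidableEq V]

/-- K_{6,6} minus a perfect matching: vertices (s, i) with s the side;
(s,i) and (t,j) are adjacent iff they are on different sides and i ≠ j. -/
def K66minus : SimpleGraph (Fin 2 × Fin 6) where
  Adj a b := a.1 ≠ b.1 ∧ a.2 ≠ b.2
  symm := ⟨fun a b h => ⟨h.1.symm, h.2.symm⟩⟩
  loopless := ⟨fun a h => h.1 rfl⟩

/-!
Suppose that no edge and no vertex-pair is reducible: every edge lies in no triangle or in at
least three, and two non-adjacent vertices with a common neighbour have at least four.

If an edge `uv` lies in four triangles, the closed neighbourhood of `v` spans `13 > 3 · 6 - 6`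
edges. If it lies in exactly three, with `W` the common neighbours, sparsity of `{u, v} ∪ W`
gives `i(W) ≤ 2`, and then sparsity of `N[v] ∪ {a}`, `a` the fifth neighbour of `u`, leaves
room for at most three common neighbours of the non-adjacent pair `a, v`. Hence `G` is
triangle-free.

Fix then a vertex `v` and let `N₂(v) = secondNbrs G v` be the vertices at distance two. Each
of the five neighbours of `v` has its four other neighbours in `N₂(v)`, and each vertex of
`N₂(v)` has at least four neighbours in `N(v)`; double counting and sparsity of
`{v} ∪ N(v) ∪ N₂(v)` show that `|N₂(v)| = 5`, each of its vertices having exactly four neighbours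
in `N(v)`. Their fifth neighbours all coincide in one vertex `z` with `N(z) = N₂(v)`. By
connectivity `G` is bipartite with sides `{v} ∪ N₂(v)` and `{z} ∪ N(v)` of size six, and a
`5`-regular bipartite graph on `6 + 6` vertices is `K_{6,6}` minus a perfect matching.
-/

section Counting

variable {G : SimpleGraph V} [DecidableRel G.Adj]

omit [DecidableEq V] in
lemma mem_commonNbrs {u v t : V} : t ∈ commonNbrs G u v ↔ G.Adj u t ∧ G.Adj v t := by
  simp [commonNbrs]

omit [DecidableEq V] in
lemma commonNbrs_eq_filter_neighborFinset (u v : V) :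
    commonNbrs G u v = {t ∈ G.neighborFinset u | G.Adj v t} := by
  ext t
  simp [mem_commonNbrs]

omit [Fintype V] [DecidableEq V] in
variable (G) in
lemma two_mul_edgesWithin_s13 (X : Finset V) :
    2 * edgesWithin G X = ∑ x ∈ X, #{y ∈ X | G.Adj x y} := by
  have hpairs : #{p ∈ X ×ˢ X | G.Adj p.1 p.2} = ∑ x ∈ X, #{y ∈ X | G.Adj x y} := by
    simp only [card_filter, sum_product]
  have hdeg : ∀ x : X, (G.induce (X : Set V)).degree x = #{y ∈ X | G.Adj x y} := by
    intro x
    rw [← SimpleGraph.card_neighborFinset_eq_degree, ← card_map (Function.Embedding.subtype _)]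
    congr 1
    ext y
    simp [and_comm]
  have heven : Even (∑ x ∈ X, #{y ∈ X | G.Adj x y}) := by
    rw [← sum_coe_sort X, ← sum_congr rfl fun x _ => hdeg x]
    exact ⟨_, (G.induce (X : Set V)).sum_degrees_eq_twice_card_edges.trans (two_mul _)⟩
  rw [edgesWithin, hpairs, Nat.mul_div_cancel' (even_iff_two_dvd.1 heven)]

omit [Fintype V] [DecidableEq V] in
variable (G) in
lemma sum_card_filter_adj_comm (S T : Finset V) :
    ∑ x ∈ S, #{y ∈ T | G.Adj x y} = ∑ y ∈ T, #{x ∈ S | G.Adj y x} := by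
  simp only [card_filter]
  rw [sum_comm]
  simp only [G.adj_comm]

omit [Fintype V] in
lemma edgesWithin_insert {x : V} {X : Finset V} (hx : x ∉ X) :
    edgesWithin G (insert x X) = edgesWithin G X + #{y ∈ X | G.Adj x y} := by
  have hrow : ∀ y, #{z ∈ insert x X | G.Adj y z} =
      #{z ∈ X | G.Adj y z} + #{z ∈ ({x} : Finset V) | G.Adj y z} := by
    intro y
    rw [insert_eq, union_comm, filter_union, card_union_of_disjoint
      (disjoint_filter_filter (disjoint_singleton_right.2 hx))]
  have hcol := sum_card_filter_adj_comm G X {x}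
  have h := two_mul_edgesWithin_s13 G (insert x X)
  rw [sum_insert hx, hrow x, sum_congr rfl fun y _ => hrow y, sum_add_distrib, hcol,
    ← two_mul_edgesWithin_s13, sum_singleton] at h
  simp only [filter_singleton, G.irrefl, if_false, card_empty] at h
  omega

omit [Fintype V] in
lemma sum_card_filter_adj_le_edgesWithin_union {S T : Finset V} (hST : Disjoint S T) :
    ∑ x ∈ S, #{y ∈ T | G.Adj x y} ≤ edgesWithin G (S ∪ T) := by
  have h := two_mul_edgesWithin_s13 G (S ∪ T)
  rw [sum_union hST] at h
  have h1 : ∑ x ∈ S, #{y ∈ T | G.Adj x y} ≤ ∑ x ∈ S, #{y ∈ S ∪ T | G.Adj x y} :=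
    sum_le_sum fun x _ => card_le_card (filter_subset_filter _ subset_union_right)
  have h2 : ∑ y ∈ T, #{x ∈ S | G.Adj y x} ≤ ∑ y ∈ T, #{x ∈ S ∪ T | G.Adj y x} :=
    sum_le_sum fun y _ => card_le_card (filter_subset_filter _ subset_union_left)
  rw [← sum_card_filter_adj_comm G S T] at h2
  omega

end Counting

omit [DecidableEq V] in
lemma SimpleGraph.Connected.mem_of_neighborFinset_subset {G : SimpleGraph V}
    [DecidableRel G.Adj] (hconn : G.Connected) {S : Finset V} {v : V} (hv : v ∈ S)
    (hS : ∀ x ∈ S, G.neighborFinset x ⊆ S) (y : V) : y ∈ S := by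
  suffices ∀ x y (p : G.Walk x y), x ∈ S → y ∈ S from
    (hconn.preconnected v y).elim (this v y · hv)
  intro x y p
  induction p with
  | nil => exact id
  | cons h _ ih => exact fun hx => ih (hS _ hx ((G.mem_neighborFinset _ _).2 h))

omit [Fintype V] in
theorem nonempty_iso_K66minus_of_involutive {G : SimpleGraph V} (A : Finset V) (hA : #A = 6)
    (μ : V → V) (hμ : Function.Involutive μ) (hμA : ∀ x, x ∈ A ↔ μ x ∉ A)
    (hadj : ∀ x y, G.Adj x y ↔ (x ∈ A ↔ y ∉ A) ∧ y ≠ μ x) :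
    Nonempty (G ≃g K66minus) := by
  let e : A ≃ Fin 6 := A.equivFinOfCardEq hA
  let rep (x : V) : A :=
    if hx : x ∈ A then ⟨x, hx⟩ else ⟨μ x, not_not.1 (mt (hμA x).2 hx)⟩
  let φ : V ≃ Fin 2 × Fin 6 :=
    { toFun x := (if x ∈ A then 0 else 1, e (rep x))
      invFun p := if p.1 = 0 then e.symm p.2 else μ (e.symm p.2)
      left_inv x := by by_cases hx : x ∈ A <;> simp [rep, hx, hμ x]
      right_inv := by
        rintro ⟨i, k⟩
        have hk := (e.symm k).2
        fin_cases i
        · simp [rep, hk]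
        · simp [rep, (hμA _).1 hk, hμ (e.symm k : V)] }
  refine ⟨⟨φ, fun {x y} => ?_⟩⟩
  rw [hadj]
  change (_ ≠ _ ∧ _ ≠ _) ↔ _
  by_cases hx : x ∈ A <;> by_cases hy : y ∈ A <;>
    simp [φ, rep, hx, hy, e.apply_eq_iff_eq, Subtype.ext_iff]
  exacts [not_congr (by rw [eq_comm, hμ.eq_iff]), not_congr eq_comm]

theorem nonempty_iso_K66minus_of_bipartite {G : SimpleGraph V} [DecidableRel G.Adj]
    (hreg : ∀ v, G.degree v = 5) (A : Finset V) (hA : #A = 6) (hAc : #Aᶜ = 6)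
    (hbip : ∀ x y, G.Adj x y → (x ∈ A ↔ y ∉ A)) :
    Nonempty (G ≃g K66minus) := by
  have hmiss : ∀ x, ∃! y, (x ∈ A ↔ y ∉ A) ∧ ¬ G.Adj x y := by
    intro x
    set O : Finset V := {y | x ∈ A ↔ y ∉ A}
    have hO : #O = 6 := by
      by_cases hx : x ∈ A
      · rw [← hAc]; congr 1; ext y; simp [O, hx]
      · rw [← hA]; congr 1; ext y; simp [O, hx]
    have hN : G.neighborFinset x ⊆ O := fun y hy => by
      simpa [O] using hbip x y ((G.mem_neighborFinset x y).1 hy)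
    obtain ⟨y, hy⟩ := card_eq_one.1 (show #(O \ G.neighborFinset x) = 1 by
      rw [card_sdiff_of_subset hN, hO, G.card_neighborFinset_eq_degree, hreg])
    have hmem : ∀ y', y' ∈ O \ G.neighborFinset x ↔ (x ∈ A ↔ y' ∉ A) ∧ ¬ G.Adj x y' := by
      simp [O]
    refine ⟨y, (hmem y).1 (hy ▸ mem_singleton_self y), fun y' hy' => ?_⟩
    simpa [hy] using (hmem y').2 hy'
  choose μ hμ hμ_unique using hmiss
  have hμA : ∀ x, x ∈ A ↔ μ x ∉ A := fun x => (hμ x).1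
  have hμ_invol : Function.Involutive μ := fun x =>
    (hμ_unique (μ x) x ⟨by have := hμA x; tauto, fun h => (hμ x).2 h.symm⟩).symm
  refine nonempty_iso_K66minus_of_involutive A hA μ hμ_invol hμA fun x y =>
    ⟨fun h => ⟨hbip x y h, fun hy => (hμ x).2 (hy ▸ h)⟩,
      fun ⟨hside, hne⟩ => by_contra fun h => hne (hμ_unique x y ⟨hside, h⟩)⟩

theorem nonempty_iso_K66minus_of_neighborFinset_subset {G : SimpleGraph V} [DecidableRel G.Adj]
    (hconn : G.Connected) (hreg : ∀ v, G.degree v = 5) {A B : Finset V} (hA : #A = 6)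
    (hB : #B = 6) (hAB : Disjoint A B) (hA_nbrs : ∀ x ∈ A, G.neighborFinset x ⊆ B)
    (hB_nbrs : ∀ x ∈ B, G.neighborFinset x ⊆ A) :
    Nonempty (G ≃g K66minus) := by
  obtain ⟨a, ha⟩ := card_pos.1 (show 0 < #A by omega)
  have hcover : ∀ y, y ∈ A ∪ B := hconn.mem_of_neighborFinset_subset (mem_union_left _ ha)
    fun x hx => (mem_union.1 hx).elim (fun hx => (hA_nbrs x hx).trans subset_union_right)
      fun hx => (hB_nbrs x hx).trans subset_union_left
  have hAc : Aᶜ = B := by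
    ext y
    have := hcover y
    have := fun h : y ∈ A => disjoint_left.1 hAB h
    simp only [mem_compl, mem_union] at *
    tauto
  refine nonempty_iso_K66minus_of_bipartite hreg A hA (hAc ▸ hB) fun x y hxy => ?_
  have hy := (G.mem_neighborFinset x y).2 hxy
  by_cases hx : x ∈ A
  · exact iff_of_true hx (disjoint_right.1 hAB (hA_nbrs x hx hy))
  · have hxB : x ∈ B := by simpa [hx] using hcover x
    exact iff_of_false hx (not_not.2 (hB_nbrs x hxB hy))

def NoReducibleEdge (G : SimpleGraph V) [DecidableRel G.Adj] : Prop :=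
  ∀ u v, G.Adj u v → (commonNbrs G u v).Nonempty → 3 ≤ #(commonNbrs G u v)

def NoReduciblePair (G : SimpleGraph V) [DecidableRel G.Adj] : Prop :=
  ∀ u v, u ≠ v → ¬ G.Adj u v → (commonNbrs G u v).Nonempty → 4 ≤ #(commonNbrs G u v)

section Triangles

variable {G : SimpleGraph V} [DecidableRel G.Adj] {u v : V}

lemma filter_adj_erase_neighborFinset (u v : V) :
    {x ∈ (G.neighborFinset v).erase u | G.Adj u x} = commonNbrs G u v := by
  ext x
  simp only [mem_filter, mem_erase, SimpleGraph.mem_neighborFinset, mem_commonNbrs]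
  exact ⟨fun h => ⟨h.2, h.1.2⟩, fun h => ⟨⟨G.ne_of_adj h.1 |>.symm, h.2⟩, h.1⟩⟩

lemma commonNbrs_subset_erase_neighborFinset (u v : V) :
    commonNbrs G u v ⊆ (G.neighborFinset v).erase u :=
  filter_adj_erase_neighborFinset (G := G) u v ▸ filter_subset _ _

lemma card_erase_neighborFinset (hreg : ∀ v, G.degree v = 5) (huv : G.Adj u v) :
    #((G.neighborFinset v).erase u) = 4 := by
  rw [card_erase_of_mem ((G.mem_neighborFinset v u).2 huv.symm),
    G.card_neighborFinset_eq_degree, hreg]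

lemma edgesWithin_commonNbrs_lt_card (hsp : Sparse3 G) (huv : G.Adj u v)
    (hW : (commonNbrs G u v).Nonempty) :
    edgesWithin G (commonNbrs G u v) < #(commonNbrs G u v) := by
  have huW : u ∉ commonNbrs G u v := fun h => G.irrefl (mem_commonNbrs.1 h).1
  have hvW : v ∉ insert u (commonNbrs G u v) := by
    simp only [mem_insert, not_or]
    exact ⟨(G.ne_of_adj huv).symm, fun h => G.irrefl (mem_commonNbrs.1 h).2⟩
  have hadj_v : ∀ w ∈ insert u (commonNbrs G u v), G.Adj v w := fun w hw => by
    rcases mem_insert.1 hw with rfl | hw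
    exacts [huv.symm, (mem_commonNbrs.1 hw).2]
  have h := hsp (insert v (insert u (commonNbrs G u v)))
    (by rw [card_insert_of_notMem hvW, card_insert_of_notMem huW]; have := hW.card_pos; omega)
  rw [edgesWithin_insert hvW, edgesWithin_insert huW, filter_true_of_mem hadj_v,
    filter_true_of_mem fun w hw => (mem_commonNbrs.1 hw).1, card_insert_of_notMem hvW,
    card_insert_of_notMem huW] at h
  omega

lemma two_le_card_filter_adj_of_mem_commonNbrs (hE : NoReducibleEdge G) (huv : G.Adj u v)
    {w : V} (hw : w ∈ commonNbrs G u v) :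
    2 ≤ #{x ∈ (G.neighborFinset v).erase u | G.Adj w x} := by
  obtain ⟨huw, hvw⟩ := mem_commonNbrs.1 hw
  have hu : u ∈ commonNbrs G v w := mem_commonNbrs.2 ⟨huv.symm, huw.symm⟩
  have h3 := hE v w hvw ⟨u, hu⟩
  rw [commonNbrs_eq_filter_neighborFinset,
    ← insert_erase ((G.mem_neighborFinset v u).2 huv.symm), filter_insert, if_pos huw.symm] at h3
  have := card_insert_le u {x ∈ (G.neighborFinset v).erase u | G.Adj w x}
  omega

lemma card_commonNbrs_ne_four (hreg : ∀ v, G.degree v = 5) (hsp : Sparse3 G)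
    (hE : NoReducibleEdge G) (huv : G.Adj u v) : #(commonNbrs G u v) ≠ 4 := by
  intro h4
  have hWT : commonNbrs G u v = (G.neighborFinset v).erase u :=
    eq_of_subset_of_card_le (commonNbrs_subset_erase_neighborFinset u v)
      (by rw [card_erase_neighborFinset hreg huv, h4])
  have hsum : 8 ≤ 2 * edgesWithin G (commonNbrs G u v) := by
    rw [two_mul_edgesWithin_s13]
    calc 8 = ∑ _w ∈ commonNbrs G u v, 2 := by simp [h4]
      _ ≤ _ := sum_le_sum fun w hw => hWT ▸ two_le_card_filter_adj_of_mem_commonNbrs hE huv hw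
  have := edgesWithin_commonNbrs_lt_card hsp huv (card_pos.1 (by omega))
  omega

lemma edgesWithin_insert_neighborFinset (huv : G.Adj u v) :
    edgesWithin G (insert v (G.neighborFinset v)) =
      edgesWithin G ((G.neighborFinset v).erase u) + #(commonNbrs G u v) + G.degree v := by
  have hN : edgesWithin G (G.neighborFinset v) =
      edgesWithin G ((G.neighborFinset v).erase u) + #(commonNbrs G u v) := by
    conv_lhs => rw [← insert_erase ((G.mem_neighborFinset v u).2 huv.symm)]
    rw [edgesWithin_insert (notMem_erase u _), filter_adj_erase_neighborFinset]
  rw [edgesWithin_insert (G.notMem_neighborFinset_self v), hN,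
    filter_true_of_mem fun x hx => (G.mem_neighborFinset v x).1 hx, G.card_neighborFinset_eq_degree]

lemma card_commonNbrs_le_three_of_card_commonNbrs_eq_three (hreg : ∀ v, G.degree v = 5)
    (hsp : Sparse3 G) (hE : NoReducibleEdge G) (huv : G.Adj u v) (h3 : #(commonNbrs G u v) = 3)
    {a : V} (hua : G.Adj u a) (ha : a ∉ insert v (commonNbrs G u v)) :
    #(commonNbrs G v a) ≤ 3 := by
  obtain ⟨b, hbW, hTb⟩ : ∃ b ∉ commonNbrs G u v,
      insert b (commonNbrs G u v) = (G.neighborFinset v).erase u :=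
    exists_eq_insert_iff.2 ⟨commonNbrs_subset_erase_neighborFinset u v,
      by rw [card_erase_neighborFinset hreg huv, h3]⟩
  have hW : edgesWithin G (commonNbrs G u v) < 3 :=
    h3 ▸ edgesWithin_commonNbrs_lt_card hsp huv (card_pos.1 (by omega))
  have hT_sum : 6 + #{y ∈ commonNbrs G u v | G.Adj b y} ≤
      2 * edgesWithin G ((G.neighborFinset v).erase u) := by
    have hsum :
        6 ≤ ∑ w ∈ commonNbrs G u v, #{x ∈ insert b (commonNbrs G u v) | G.Adj w x} :=
      calc 6 = ∑ _w ∈ commonNbrs G u v, 2 := by simp [h3]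
        _ ≤ _ := sum_le_sum fun w hw => hTb ▸ two_le_card_filter_adj_of_mem_commonNbrs hE huv hw
    rw [two_mul_edgesWithin_s13, ← hTb, sum_insert hbW, filter_insert, if_neg (G.irrefl)]
    omega
  have hTW := hTb ▸ edgesWithin_insert (G := G) hbW
  have hva : ¬ G.Adj v a := fun h => ha (mem_insert_of_mem (mem_commonNbrs.2 ⟨hua, h⟩))
  have haN : a ∉ insert v (G.neighborFinset v) := by
    rw [mem_insert, not_or, G.mem_neighborFinset]
    exact ⟨fun h => ha (h ▸ mem_insert_self _ _), hva⟩
  have h7 := hsp (insert a (insert v (G.neighborFinset v))) (by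
    rw [card_insert_of_notMem haN, card_insert_of_notMem (G.notMem_neighborFinset_self v),
      G.card_neighborFinset_eq_degree, hreg]
    omega)
  rw [edgesWithin_insert haN, edgesWithin_insert_neighborFinset huv, filter_insert,
    if_neg fun h => hva h.symm, ← commonNbrs_eq_filter_neighborFinset, card_insert_of_notMem haN,
    card_insert_of_notMem (G.notMem_neighborFinset_self v), G.card_neighborFinset_eq_degree,
    hreg, h3] at h7
  omega

lemma card_commonNbrs_ne_three (hreg : ∀ v, G.degree v = 5) (hsp : Sparse3 G)
    (hE : NoReducibleEdge G) (hP : NoReduciblePair G) (huv : G.Adj u v) :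
    #(commonNbrs G u v) ≠ 3 := by
  intro h3
  obtain ⟨a, hua, ha⟩ : ∃ a ∈ G.neighborFinset u, a ∉ insert v (commonNbrs G u v) :=
    exists_mem_notMem_of_card_lt_card (by
      rw [G.card_neighborFinset_eq_degree, hreg]
      have := card_insert_le v (commonNbrs G u v)
      omega)
  rw [G.mem_neighborFinset] at hua
  have hva : ¬ G.Adj v a := fun h => ha (mem_insert_of_mem (mem_commonNbrs.2 ⟨hua, h⟩))
  have h4 := hP v a (fun h => ha (h ▸ mem_insert_self _ _)) hva
    ⟨u, mem_commonNbrs.2 ⟨huv.symm, hua.symm⟩⟩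
  have := card_commonNbrs_le_three_of_card_commonNbrs_eq_three hreg hsp hE huv h3 hua ha
  omega

lemma cliqueFree_three_of_noReducible (hreg : ∀ v, G.degree v = 5) (hsp : Sparse3 G)
    (hE : NoReducibleEdge G) (hP : NoReduciblePair G) : G.CliqueFree 3 := by
  intro t ht
  obtain ⟨a, b, c, hab, hac, hbc, rfl⟩ := SimpleGraph.is3Clique_iff.1 ht
  have h3 := hE a b hab ⟨c, mem_commonNbrs.2 ⟨hac, hbc⟩⟩
  have h4 := card_erase_neighborFinset hreg hab ▸
    card_le_card (commonNbrs_subset_erase_neighborFinset a b)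
  have := card_commonNbrs_ne_three hreg hsp hE hP hab
  have := card_commonNbrs_ne_four hreg hsp hE hab
  omega

end Triangles

def secondNbrs (G : SimpleGraph V) [DecidableRel G.Adj] (v : V) : Finset V :=
  {w | w ≠ v ∧ ¬ G.Adj v w ∧ (commonNbrs G v w).Nonempty}

section TriangleFree

variable {G : SimpleGraph V} [DecidableRel G.Adj] {v : V}

lemma mem_secondNbrs {w : V} :
    w ∈ secondNbrs G v ↔ w ≠ v ∧ ¬ G.Adj v w ∧ (commonNbrs G v w).Nonempty := by
  simp [secondNbrs]

lemma notMem_secondNbrs_self : v ∉ secondNbrs G v := fun h => (mem_secondNbrs.1 h).1 rfl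

lemma disjoint_neighborFinset_secondNbrs : Disjoint (G.neighborFinset v) (secondNbrs G v) :=
  disjoint_left.2 fun _ hx hxM => (mem_secondNbrs.1 hxM).2.1 ((G.mem_neighborFinset _ _).1 hx)

lemma mem_secondNbrs_of_adj_of_adj (hcf : G.CliqueFree 3) {x y : V}
    (hvx : G.Adj v x) (hxy : G.Adj x y) (hyv : y ≠ v) : y ∈ secondNbrs G v := by
  have hx : x ∈ commonNbrs G v y := mem_commonNbrs.2 ⟨hvx, hxy.symm⟩
  exact mem_secondNbrs.2 ⟨hyv, fun hvy => hcf {v, x, y}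
    (SimpleGraph.is3Clique_triple_iff.2 ⟨hvx, hvy, hxy⟩), ⟨x, hx⟩⟩

lemma neighborFinset_eq_insert_filter_secondNbrs (hcf : G.CliqueFree 3)
    {x : V} (hvx : G.Adj v x) :
    G.neighborFinset x = insert v {w ∈ secondNbrs G v | G.Adj x w} := by
  ext y
  simp only [SimpleGraph.mem_neighborFinset, mem_insert, mem_filter]
  constructor
  · intro hxy
    by_cases hyv : y = v
    · exact Or.inl hyv
    · exact Or.inr ⟨mem_secondNbrs_of_adj_of_adj hcf hvx hxy hyv, hxy⟩
  · rintro (rfl | ⟨-, h⟩)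
    exacts [hvx.symm, h]

lemma card_filter_adj_secondNbrs (hreg : ∀ v, G.degree v = 5)
    (hcf : G.CliqueFree 3) {x : V} (hvx : G.Adj v x) :
    #{w ∈ secondNbrs G v | G.Adj x w} = 4 := by
  have h := G.card_neighborFinset_eq_degree x
  rw [hreg, neighborFinset_eq_insert_filter_secondNbrs hcf hvx,
    card_insert_of_notMem fun h => (mem_secondNbrs.1 (mem_filter.1 h).1).1 rfl] at h
  omega

lemma four_le_card_filter_adj_neighborFinset (hP : NoReduciblePair G) {w : V}
    (hw : w ∈ secondNbrs G v) : 4 ≤ #{x ∈ G.neighborFinset v | G.Adj w x} := by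
  obtain ⟨hwv, hvw, hne⟩ := mem_secondNbrs.1 hw
  rw [← commonNbrs_eq_filter_neighborFinset]
  exact hP v w hwv.symm hvw hne

lemma sum_card_filter_adj_neighborFinset (hreg : ∀ v, G.degree v = 5)
    (hcf : G.CliqueFree 3) :
    ∑ w ∈ secondNbrs G v, #{x ∈ G.neighborFinset v | G.Adj w x} = 20 := by
  rw [← sum_card_filter_adj_comm, sum_congr rfl fun x hx =>
    card_filter_adj_secondNbrs hreg hcf ((G.mem_neighborFinset v x).1 hx), sum_const,
    G.card_neighborFinset_eq_degree, hreg, smul_eq_mul]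

lemma card_secondNbrs (hreg : ∀ v, G.degree v = 5) (hsp : Sparse3 G)
    (hcf : G.CliqueFree 3) (hP : NoReduciblePair G) :
    #(secondNbrs G v) = 5 := by
  have hN : #(G.neighborFinset v) = 5 := by rw [G.card_neighborFinset_eq_degree, hreg]
  have hle : #(secondNbrs G v) * 4 ≤ 20 := by
    rw [← sum_card_filter_adj_neighborFinset hreg hcf, ← smul_eq_mul, ← sum_const]
    exact sum_le_sum fun w hw => four_le_card_filter_adj_neighborFinset hP hw
  have hv : v ∉ G.neighborFinset v ∪ secondNbrs G v := by
    simp [notMem_secondNbrs_self]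
  have hvN : 5 ≤ #{y ∈ G.neighborFinset v ∪ secondNbrs G v | G.Adj v y} :=
    hN ▸ card_le_card fun x hx =>
      mem_filter.2 ⟨mem_union_left _ hx, (G.mem_neighborFinset v x).1 hx⟩
  have hNM := sum_card_filter_adj_le_edgesWithin_union (G := G)
    (disjoint_neighborFinset_secondNbrs (G := G) (v := v))
  rw [sum_card_filter_adj_comm, sum_card_filter_adj_neighborFinset hreg hcf] at hNM
  have h := hsp (insert v (G.neighborFinset v ∪ secondNbrs G v)) (by
    rw [card_insert_of_notMem hv, card_union_of_disjoint disjoint_neighborFinset_secondNbrs]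
    omega)
  rw [edgesWithin_insert hv, card_insert_of_notMem hv,
    card_union_of_disjoint disjoint_neighborFinset_secondNbrs] at h
  omega

lemma card_filter_adj_neighborFinset_eq_four (hreg : ∀ v, G.degree v = 5) (hsp : Sparse3 G)
    (hcf : G.CliqueFree 3) (hP : NoReduciblePair G) {w : V}
    (hw : w ∈ secondNbrs G v) : #{x ∈ G.neighborFinset v | G.Adj w x} = 4 := by
  have hsum : ∑ _w ∈ secondNbrs G v, 4 =
      ∑ w ∈ secondNbrs G v, #{x ∈ G.neighborFinset v | G.Adj w x} := by
    rw [sum_card_filter_adj_neighborFinset hreg hcf, sum_const, card_secondNbrs hreg hsp hcf hP,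
      smul_eq_mul]
  exact ((sum_eq_sum_iff_of_le fun w hw => four_le_card_filter_adj_neighborFinset hP hw).1
    hsum w hw).symm

lemma exists_adj_adj_of_mem_secondNbrs (hreg : ∀ v, G.degree v = 5) (hP : NoReduciblePair G)
    {w w' : V} (hw : w ∈ secondNbrs G v) (hw' : w' ∈ secondNbrs G v) :
    ∃ x, G.Adj v x ∧ G.Adj w x ∧ G.Adj w' x := by
  obtain ⟨x, hx⟩ := inter_nonempty_of_card_lt_card_add_card
    (filter_subset (fun x => G.Adj w x) (G.neighborFinset v))
    (filter_subset (fun x => G.Adj w' x) (G.neighborFinset v)) (by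
      rw [G.card_neighborFinset_eq_degree, hreg]
      have := four_le_card_filter_adj_neighborFinset hP hw
      have := four_le_card_filter_adj_neighborFinset hP hw'
      omega)
  simp only [mem_inter, mem_filter, SimpleGraph.mem_neighborFinset] at hx
  exact ⟨x, hx.1.1, hx.1.2, hx.2.2⟩

lemma not_adj_of_mem_secondNbrs (hreg : ∀ v, G.degree v = 5)
    (hcf : G.CliqueFree 3) (hP : NoReduciblePair G) {w w' : V}
    (hw : w ∈ secondNbrs G v) (hw' : w' ∈ secondNbrs G v) : ¬ G.Adj w w' := fun h => by
  obtain ⟨x, -, hwx, hw'x⟩ := exists_adj_adj_of_mem_secondNbrs hreg hP hw hw'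
  exact hcf {w, w', x} (SimpleGraph.is3Clique_triple_iff.2 ⟨h, hwx, hw'x⟩)

/-- `x` and `z` are non-adjacent with a common neighbour, so they have at least four common
neighbours, which must be all neighbours of `x` other than `v`. -/
lemma filter_adj_secondNbrs_subset_neighborFinset (hreg : ∀ v, G.degree v = 5)
    (hcf : G.CliqueFree 3) (hP : NoReduciblePair G) {x z : V}
    (hvx : G.Adj v x) (hz : z ∉ insert v (secondNbrs G v)) (hvz : ¬ G.Adj v z)
    (hxz : (commonNbrs G x z).Nonempty) :
    {w ∈ secondNbrs G v | G.Adj x w} ⊆ G.neighborFinset z := by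
  obtain ⟨hzv, hzM⟩ := not_or.1 (mt mem_insert.2 hz)
  have hxz_adj : ¬ G.Adj x z := fun h => hzM (mem_secondNbrs_of_adj_of_adj hcf hvx h hzv)
  have hsub : commonNbrs G x z ⊆ {w ∈ secondNbrs G v | G.Adj x w} := fun t ht => by
    obtain ⟨hxt, hzt⟩ := mem_commonNbrs.1 ht
    have := (G.mem_neighborFinset x t).2 hxt
    rw [neighborFinset_eq_insert_filter_secondNbrs hcf hvx] at this
    exact (mem_insert.1 this).resolve_left fun h => hvz (h ▸ hzt).symm
  have heq := eq_of_subset_of_card_le hsub (by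
    rw [card_filter_adj_secondNbrs hreg hcf hvx]
    exact hP x z (fun h => hvz (h ▸ hvx)) hxz_adj hxz)
  exact heq ▸ fun w hw => (G.mem_neighborFinset z w).2 (mem_commonNbrs.1 hw).2

lemma exists_neighborFinset_eq_secondNbrs (hreg : ∀ v, G.degree v = 5) (hsp : Sparse3 G)
    (hcf : G.CliqueFree 3) (hP : NoReduciblePair G) :
    ∃ z, G.neighborFinset z = secondNbrs G v := by
  obtain ⟨w, hw⟩ := card_pos.1 (show 0 < #(secondNbrs G v) by
    rw [card_secondNbrs hreg hsp hcf hP]; omega)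
  obtain ⟨z, hwz, hz⟩ :
      ∃ z ∈ G.neighborFinset w, z ∉ {x ∈ G.neighborFinset v | G.Adj w x} :=
    exists_mem_notMem_of_card_lt_card (by
      rw [card_filter_adj_neighborFinset_eq_four hreg hsp hcf hP hw,
        G.card_neighborFinset_eq_degree, hreg]
      omega)
  rw [G.mem_neighborFinset] at hwz
  have hvz : ¬ G.Adj v z := fun h => hz (mem_filter.2 ⟨(G.mem_neighborFinset v z).2 h, hwz⟩)
  have hz_out : z ∉ insert v (secondNbrs G v) := by
    rw [mem_insert, not_or]
    exact ⟨fun h => (mem_secondNbrs.1 hw).2.1 (h ▸ hwz).symm,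
      fun h => not_adj_of_mem_secondNbrs hreg hcf hP hw h hwz⟩
  refine ⟨z, (eq_of_subset_of_card_le (fun w' hw' => ?_) ?_).symm⟩
  · obtain ⟨x, hvx, hwx, hw'x⟩ := exists_adj_adj_of_mem_secondNbrs hreg hP hw hw'
    exact filter_adj_secondNbrs_subset_neighborFinset hreg hcf hP hvx hz_out hvz
      ⟨w, mem_commonNbrs.2 ⟨hwx.symm, hwz.symm⟩⟩ (mem_filter.2 ⟨hw', hw'x.symm⟩)
  · rw [card_secondNbrs hreg hsp hcf hP, G.card_neighborFinset_eq_degree, hreg]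

lemma notMem_neighborFinset_of_neighborFinset_eq_secondNbrs {z : V}
    (hz : G.neighborFinset z = secondNbrs G v) : z ∉ G.neighborFinset v := fun h =>
  notMem_secondNbrs_self (hz ▸ (G.mem_neighborFinset _ _).2 ((G.mem_neighborFinset _ _).1 h).symm)

lemma neighborFinset_subset_insert_neighborFinset (hreg : ∀ v, G.degree v = 5)
    (hsp : Sparse3 G) (hcf : G.CliqueFree 3) (hP : NoReduciblePair G)
    {z w : V} (hz : G.neighborFinset z = secondNbrs G v) (hw : w ∈ secondNbrs G v) :
    G.neighborFinset w ⊆ insert z (G.neighborFinset v) := by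
  intro y hy
  by_cases hyN : y ∈ G.neighborFinset v
  · exact mem_insert_of_mem hyN
  have hzw : z ∈ G.neighborFinset w := (G.mem_neighborFinset _ _).2
    ((G.mem_neighborFinset _ _).1 (hz ▸ hw)).symm
  have hzN := notMem_neighborFinset_of_neighborFinset_eq_secondNbrs hz
  have hout : #{y ∈ G.neighborFinset w | y ∉ G.neighborFinset v} = 1 := by
    have h := card_filter_add_card_filter_not (s := G.neighborFinset w)
      (· ∈ G.neighborFinset v)
    have hin : {y ∈ G.neighborFinset w | y ∈ G.neighborFinset v} =
        {x ∈ G.neighborFinset v | G.Adj w x} := by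
      ext y
      simp only [mem_filter, SimpleGraph.mem_neighborFinset]
      tauto
    rw [hin, card_filter_adj_neighborFinset_eq_four hreg hsp hcf hP hw,
      G.card_neighborFinset_eq_degree, hreg] at h
    omega
  exact mem_insert.2 (Or.inl (card_le_one.1 hout.le y (mem_filter.2 ⟨hy, hyN⟩) z
    (mem_filter.2 ⟨hzw, hzN⟩)))

theorem nonempty_iso_K66minus_of_cliqueFree (hconn : G.Connected)
    (hreg : ∀ v, G.degree v = 5) (hsp : Sparse3 G)
    (hcf : G.CliqueFree 3) (hP : NoReduciblePair G) :
    Nonempty (G ≃g K66minus) := by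
  obtain ⟨v⟩ := hconn.nonempty
  obtain ⟨z, hz⟩ := exists_neighborFinset_eq_secondNbrs (v := v) hreg hsp hcf hP
  have hzN := notMem_neighborFinset_of_neighborFinset_eq_secondNbrs hz
  have hzM : z ∉ secondNbrs G v := fun h => G.irrefl ((G.mem_neighborFinset _ _).1 (hz ▸ h))
  have hvz : v ≠ z := by
    rintro rfl
    obtain ⟨x, hx⟩ := card_pos.1 (show 0 < #(G.neighborFinset v) by
      rw [G.card_neighborFinset_eq_degree, hreg]; omega)
    exact disjoint_left.1 disjoint_neighborFinset_secondNbrs hx (hz ▸ hx)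
  refine nonempty_iso_K66minus_of_neighborFinset_subset (A := insert v (secondNbrs G v))
    (B := insert z (G.neighborFinset v)) hconn hreg ?_ ?_ ?_ ?_ ?_
  · rw [card_insert_of_notMem notMem_secondNbrs_self, card_secondNbrs hreg hsp hcf hP]
  · rw [card_insert_of_notMem hzN, G.card_neighborFinset_eq_degree, hreg]
  · simp only [disjoint_insert_left, disjoint_insert_right, mem_insert, not_or]
    exact ⟨⟨hvz.symm, hzM⟩, G.notMem_neighborFinset_self v,
      disjoint_neighborFinset_secondNbrs.symm⟩
  · intro x hx
    rcases mem_insert.1 hx with rfl | hx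
    exacts [subset_insert _ _, neighborFinset_subset_insert_neighborFinset hreg hsp hcf hP hz hx]
  · intro x hx
    rcases mem_insert.1 hx with rfl | hx
    · exact hz ▸ subset_insert _ _
    · rw [neighborFinset_eq_insert_filter_secondNbrs hcf ((G.mem_neighborFinset _ _).1 hx)]
      exact insert_subset_insert _ (filter_subset _ _)

end TriangleFree

theorem stmt13 (G : SimpleGraph V) [DecidableRel G.Adj]
    (hconn : G.Connected) (hreg : ∀ v, G.degree v = 5) (hsp : Sparse3 G)
    (hniso : ¬ Nonempty (G ≃g K66minus)) :
    (∃ u v : V, G.Adj u v ∧ 1 ≤ (commonNbrs G u v).card ∧ (commonNbrs G u v).card ≤ 2) ∨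
    (∃ u v : V, u ≠ v ∧ ¬ G.Adj u v ∧ 1 ≤ (commonNbrs G u v).card ∧ (commonNbrs G u v).card ≤ 3) := by
  by_contra hcon
  simp only [not_or, not_exists, not_and, not_le] at hcon
  have hE : NoReducibleEdge G := fun u v huv hne => hcon.1 u v huv hne.card_pos
  have hP : NoReduciblePair G := fun u v hne hnadj hc => hcon.2 u v hne hnadj hc.card_pos
  exact hniso (nonempty_iso_K66minus_of_cliqueFree hconn hreg hsp
    (cliqueFree_three_of_noReducible hreg hsp hE hP) hP)
end

section
/- The graph K_{6,6} minus a perfect matching is 5-regular, 3-sparse, triangle-free, and every pair of non-adjacent vertices has either zero or exactly four common neighbours. -/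
/-!
Write `S₀, S₁ ⊆ Fin 6` for the columns that a vertex set `X` occupies on the two sides, with
`a = |S₀|`, `b = |S₁|`. An edge inside `X` joins `(0, j)` and `(1, j')` with `j ≠ j'`, so
`i(X) = ab - |S₀ ∩ S₁|`, and `|S₀ ∩ S₁| ≥ a + b - 6` because `S₀ ∪ S₁` has at most six columns.
The resulting bound `i(X) ≤ ab - max(0, a + b - 6)` is at most `3(a + b) - 6` for all
`a, b ≤ 6` with `a + b ≥ 3`. The other three properties are finite checks.
-/

open Finset

variable {V : Type*} [Fintype V] [DecidableEq V]

instance : DecidableRel K66minus.Adj := fun a b =>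
  inferInstanceAs (Decidable (a.1 ≠ b.1 ∧ a.2 ≠ b.2))

theorem Finset.card_filter_ne_product_add_card_inter {α : Type*} [DecidableEq α]
    (s t : Finset α) : #((s ×ˢ t).filter fun p => p.1 ≠ p.2) + #(s ∩ t) = #s * #t := by
  have hdiag : ((s ×ˢ t).filter fun p => p.1 = p.2) = (s ∩ t).diag := by
    ext ⟨a, b⟩
    simp only [mem_filter, mem_product, mem_diag, mem_inter]
    constructor <;> rintro ⟨⟨ha, hb⟩, rfl⟩ <;> exact ⟨⟨ha, hb⟩, rfl⟩
  rw [← diag_card (s ∩ t), ← hdiag, add_comm, card_filter_add_card_filter_not, card_product]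

namespace K66minus

def columns (X : Finset (Fin 2 × Fin 6)) (i : Fin 2) : Finset (Fin 6) :=
  univ.filter fun j => (i, j) ∈ X

lemma card_eq_card_side_add_card_side (X : Finset (Fin 2 × Fin 6)) :
    #X = #(columns X 0) + #(columns X 1) := by
  simp only [columns, card_filter]
  rw [← Fin.sum_univ_two (f := fun i => ∑ j, if (i, j) ∈ X then 1 else 0), ← Fintype.sum_prod_type',
    ← card_filter, filter_mem_eq_inter, univ_inter]

lemma card_adj_pairs (X : Finset (Fin 2 × Fin 6)) :
    #((X ×ˢ X).filter fun p => K66minus.Adj p.1 p.2) =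
      #((columns X 0 ×ˢ columns X 1).filter fun p => p.1 ≠ p.2) +
      #((columns X 1 ×ˢ columns X 0).filter fun p => p.1 ≠ p.2) := by
  have hfilter : ((X ×ˢ X).filter fun p => K66minus.Adj p.1 p.2) =
      univ.filter fun p => (p.1 ∈ X ∧ p.2 ∈ X) ∧ K66minus.Adj p.1 p.2 := by
    ext
    simp
  simp only [hfilter, columns, card_filter, Fintype.sum_prod_type, Fin.sum_univ_two, sum_product,
    sum_filter]
  simp [K66minus, ite_and]

lemma edgesWithin_add_card_inter (X : Finset (Fin 2 × Fin 6)) :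
    edgesWithin K66minus X + #(columns X 0 ∩ columns X 1) = #(columns X 0) * #(columns X 1) := by
  have h₀₁ := card_filter_ne_product_add_card_inter (columns X 0) (columns X 1)
  have h₁₀ := card_filter_ne_product_add_card_inter (columns X 1) (columns X 0)
  rw [inter_comm, mul_comm] at h₁₀
  rw [edgesWithin, card_adj_pairs]
  omega

lemma add_six_le_three_mul {a b c e : ℕ} (ha : a ≤ 6) (hb : b ≤ 6) (hc : a + b ≤ 6 + c)
    (he : e + c = a * b) (hab : 3 ≤ a + b) : e + 6 ≤ 3 * (a + b) := by
  interval_cases a <;> interval_cases b <;> omega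

theorem sparse3 : Sparse3 K66minus := by
  intro X hX
  have hcard (S : Finset (Fin 6)) : #S ≤ 6 := card_le_univ S
  have hunion := card_union_add_card_inter (columns X 0) (columns X 1)
  rw [card_eq_card_side_add_card_side] at hX ⊢
  exact add_six_le_three_mul (hcard _) (hcard _) (by linarith [hcard (columns X 0 ∪ columns X 1)])
    (edgesWithin_add_card_inter X) hX

end K66minus

theorem stmt15 :
    (∀ v, K66minus.degree v = 5) ∧
    Sparse3 K66minus ∧
    (∀ u v w : Fin 2 × Fin 6, K66minus.Adj u v → K66minus.Adj v w → K66minus.Adj u w → False) ∧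
    (∀ u v : Fin 2 × Fin 6, u ≠ v → ¬ K66minus.Adj u v →
      (commonNbrs K66minus u v).card = 0 ∨ (commonNbrs K66minus u v).card = 4) :=
  ⟨by decide, K66minus.sparse3, by decide, by decide⟩
end

section
/- Let G = (V,E) be a 3-sparse graph containing a reducible vertex-pair {u,v} with exactly one common neighbour a, and suppose the graph G' obtained by contracting u and v into a single vertex (a 3-dimensional spider contraction) is not 3-sparse. Then there exists X ⊂ V with u,v ∈ X and |X| ≥ 6 such that either (a) i(X) = 3|X| - 6, or (b) i(X) = 3|X| - 7, or (c) a ∉ X and i(X) = 3|X| - 8. -/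
open Finset

variable {V : Type*} [Fintype V] [DecidableEq V]

/-- The graph obtained from G by identifying the two vertices u and v into u
(the vertex v is removed); this is the result of contracting the pair {u,v}
(or the edge uv, if present) and simplifying. -/
def contractPair (G : SimpleGraph V) (u v : V) : SimpleGraph {x : V // x ≠ v} where
  Adj a b := a ≠ b ∧
    (G.Adj a.1 b.1 ∨ (a.1 = u ∧ G.Adj v b.1) ∨ (b.1 = u ∧ G.Adj a.1 v))
  symm := ⟨by
    rintro a b ⟨hab, h⟩
    refine ⟨hab.symm, ?_⟩
    rcases h with h | ⟨h1, h2⟩ | ⟨h1, h2⟩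
    · exact Or.inl h.symm
    · exact Or.inr (Or.inr ⟨h1, h2.symm⟩)
    · exact Or.inr (Or.inl ⟨h1, h2.symm⟩)⟩
  loopless := ⟨fun a h => h.1 rfl⟩

instance (G : SimpleGraph V) [DecidableRel G.Adj] (u v : V) :
    DecidableRel (contractPair G u v).Adj := fun a b =>
  inferInstanceAs (Decidable (a ≠ b ∧
    (G.Adj a.1 b.1 ∨ (a.1 = u ∧ G.Adj v b.1) ∨ (b.1 = u ∧ G.Adj a.1 v))))

/-!
A set `Y` violating sparsity in the contraction `G'` must contain the merged vertex `u`, since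
otherwise `G'[Y] = G[Y]`. Lift it to `X = Y ∪ {v}`, so `|X| = |Y| + 1`. Every edge of `G'[Y]`
comes from its own edge of `G[X]`, and for each common neighbour `c ∈ X` the two edges `uc`, `vc`
merge into one; hence `3|X| - 8 + [a ∈ X] ≤ i(X) ≤ 3|X| - 6`. Finally `|Y| ≥ 5`, because a
graph on 3 or 4 vertices has fewer than `3|Y| - 5` edges.
-/

section AdjPairs

variable {W : Type*} (G : SimpleGraph W) [DecidableRel G.Adj]

def adjPairs (X : Finset W) : Finset (W × W) :=
  (X ×ˢ X).filter fun p => G.Adj p.1 p.2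

@[simp]
theorem mem_adjPairs {X : Finset W} {p : W × W} :
    p ∈ adjPairs G X ↔ p.1 ∈ X ∧ p.2 ∈ X ∧ G.Adj p.1 p.2 := by
  simp [adjPairs, and_assoc]

theorem edgesWithin_eq_card_adjPairs_div_two [Fintype W] [DecidableEq W] (X : Finset W) :
    edgesWithin G X = #(adjPairs G X) / 2 := rfl

theorem card_adjPairs_le [DecidableEq W] (X : Finset W) : #(adjPairs G X) ≤ #X * #X - #X := by
  rw [← offDiag_card]
  refine card_le_card fun p hp => ?_
  obtain ⟨h1, h2, hadj⟩ := (mem_adjPairs G).1 hp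
  exact mem_offDiag.2 ⟨h1, h2, hadj.ne⟩

theorem five_le_card_of_lt_edgesWithin [Fintype W] [DecidableEq W] {Y : Finset W}
    (h3 : 3 ≤ #Y) (h : 3 * #Y < edgesWithin G Y + 6) : 5 ≤ #Y := by
  have hle := card_adjPairs_le G Y
  rw [edgesWithin_eq_card_adjPairs_div_two] at h
  by_contra! hlt
  obtain hY | hY : #Y = 3 ∨ #Y = 4 := by omega
  all_goals rw [hY] at hle h; omega

end AdjPairs

section ContractPair

variable {W : Type*} (G : SimpleGraph W) {u v : W}

theorem contractPair_adj {b c : {x // x ≠ v}} :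
    (contractPair G u v).Adj b c ↔
      b ≠ c ∧ (G.Adj b c ∨ (b.1 = u ∧ G.Adj v c) ∨ (c.1 = u ∧ G.Adj b v)) := Iff.rfl

variable [Fintype W] [DecidableEq W] [DecidableRel G.Adj]

theorem edgesWithin_contractPair_le_of_notMem (huv : u ≠ v) {Y : Finset {x // x ≠ v}}
    (hu : ⟨u, huv⟩ ∉ Y) :
    edgesWithin (contractPair G u v) Y ≤ edgesWithin G (Y.map (.subtype _)) := by
  rw [edgesWithin_eq_card_adjPairs_div_two, edgesWithin_eq_card_adjPairs_div_two]
  refine Nat.div_le_div_right <| card_le_card_of_injOn (fun p => (p.1.1, p.2.1)) ?_ ?_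
  · rintro ⟨b, c⟩ hp
    obtain ⟨hbY, hcY, -, hadj⟩ := (mem_adjPairs _).1 hp
    refine (mem_adjPairs G).2 ⟨mem_map_of_mem _ hbY, mem_map_of_mem _ hcY, ?_⟩
    rcases hadj with h | ⟨hb, -⟩ | ⟨hc, -⟩
    · exact h
    · exact (hu ((Subtype.ext hb : b = ⟨u, huv⟩) ▸ hbY)).elim
    · exact (hu ((Subtype.ext hc : c = ⟨u, huv⟩) ▸ hcY)).elim
  · exact fun p _ q _ h =>
      Prod.ext (Subtype.ext (congrArg Prod.fst h)) (Subtype.ext (congrArg Prod.snd h))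

theorem edgesWithin_contractPair_add_card_commonNbrs_le (Y : Finset {x // x ≠ v}) :
    edgesWithin (contractPair G u v) Y + #(commonNbrs G u v ∩ insert v (Y.map (.subtype _)))
      ≤ edgesWithin G (insert v (Y.map (.subtype _))) := by
  set X := insert v (Y.map (.subtype _))
  set C := commonNbrs G u v ∩ X
  set S := C ×ˢ {v} ∪ {v} ×ˢ C
  have hvX : v ∈ X := mem_insert_self _ _
  have hC : ∀ x ∈ C, G.Adj u x ∧ G.Adj v x ∧ x ∈ X := fun x hx => by
    simpa [C, commonNbrs, and_assoc] using hx
  have hvC : v ∉ C := fun h => G.irrefl (hC v h).2.1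
  have hS : #S = 2 * #C := by
    rw [card_union_of_disjoint, card_product, card_product, card_singleton]
    · ring
    · rw [disjoint_left]
      rintro ⟨b, c⟩ h1 h2
      simp only [mem_product, mem_singleton] at h1 h2
      exact hvC (h1.2 ▸ h2.2)
  have hSP : S ⊆ adjPairs G X := by
    rintro ⟨b, c⟩ h
    simp only [S, mem_union, mem_product, mem_singleton] at h
    rcases h with ⟨hb, rfl⟩ | ⟨rfl, hc⟩
    · exact (mem_adjPairs G).2 ⟨(hC b hb).2.2, hvX, (hC b hb).2.1.symm⟩
    · exact (mem_adjPairs G).2 ⟨hvX, (hC c hc).2.2, (hC c hc).2.1⟩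
  -- An edge of the contraction lifts to itself if it is an edge of `G`, and otherwise to the
  -- edge at `v` it came from; the edges `cv` with `c ∈ C` are never hit, as `uc` lifts to itself.
  let f : {x // x ≠ v} × {x // x ≠ v} → W × W := fun p =>
    if G.Adj p.1.1 p.2.1 then (p.1.1, p.2.1) else if p.1.1 = u then (v, p.2.1) else (p.1.1, v)
  have hmaps : Set.MapsTo f (adjPairs (contractPair G u v) Y)
      ((adjPairs G X \ S : Finset _) : Set (W × W)) := by
    rintro ⟨⟨b, hb⟩, ⟨c, hc⟩⟩ hp
    obtain ⟨hbY, hcY, hne, hadj⟩ := (mem_adjPairs _).1 hp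
    dsimp only at hbY hcY hne hadj
    have hbX : b ∈ X := mem_insert_of_mem (mem_map_of_mem _ hbY)
    have hcX : c ∈ X := mem_insert_of_mem (mem_map_of_mem _ hcY)
    simp only [f, mem_coe, mem_sdiff, mem_adjPairs, S, mem_union, mem_product, mem_singleton]
    split_ifs with hbc hbu <;> dsimp only
    · exact ⟨⟨hbX, hcX, hbc⟩, by tauto⟩
    · subst hbu
      have hvc : G.Adj v c := by
        rcases hadj with h | h | ⟨rfl, -⟩
        exacts [absurd h hbc, h.2, absurd rfl hne]
      exact ⟨⟨hvX, hcX, hvc⟩, fun h => hbc ((hC c (by tauto)).1)⟩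
    · obtain ⟨rfl, hbv⟩ : c = u ∧ G.Adj b v := by tauto
      exact ⟨⟨hbX, hvX, hbv⟩, fun h => hbc ((hC b (by tauto)).1).symm⟩
  have hinj : Set.InjOn f (adjPairs (contractPair G u v) Y) := by
    rintro ⟨⟨b, hb⟩, ⟨c, hc⟩⟩ hp ⟨⟨b', hb'⟩, ⟨c', hc'⟩⟩ hp' h
    simp only [mem_coe, mem_adjPairs, contractPair_adj, f] at hp hp' h
    split_ifs at h <;> grind
  suffices #(adjPairs (contractPair G u v) Y) + 2 * #C ≤ #(adjPairs G X) by
    rw [edgesWithin_eq_card_adjPairs_div_two, edgesWithin_eq_card_adjPairs_div_two]; omega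
  calc #(adjPairs (contractPair G u v) Y) + 2 * #C
      ≤ #(adjPairs G X \ S) + #S := by rw [hS]; gcongr; exact card_le_card_of_injOn f hmaps hinj
    _ = #(adjPairs G X) := by rw [card_sdiff_of_subset hSP]; have := card_le_card hSP; omega

end ContractPair

theorem stmt16_general (G : SimpleGraph V) [DecidableRel G.Adj] (hsp : Sparse3 G)
    (u v a : V) (huv : u ≠ v)
    (hcn : commonNbrs G u v = {a})
    (hnot : ¬ Sparse3 (contractPair G u v)) :
    ∃ X : Finset V, u ∈ X ∧ v ∈ X ∧ 6 ≤ X.card ∧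
      (edgesWithin G X + 6 = 3 * X.card ∨
       edgesWithin G X + 7 = 3 * X.card ∨
       (a ∉ X ∧ edgesWithin G X + 8 = 3 * X.card)) := by
  obtain ⟨Y, hY3, hY⟩ : ∃ Y, 3 ≤ #Y ∧ 3 * #Y < edgesWithin (contractPair G u v) Y + 6 := by
    simpa [Sparse3] using hnot
  have hY5 := five_le_card_of_lt_edgesWithin _ hY3 hY
  have hB : #(Y.map (.subtype _)) = #Y := card_map _
  by_cases hu : ⟨u, huv⟩ ∈ Y
  · have hle := edgesWithin_contractPair_add_card_commonNbrs_le G (u := u) Y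
    set X := insert v (Y.map (.subtype _))
    have hX : #X = #Y + 1 := by
      rw [card_insert_of_notMem (by simp), hB]
    rw [hcn] at hle
    have hsX := hsp X (by omega)
    refine ⟨X, mem_insert_of_mem (mem_map_of_mem _ hu), mem_insert_self _ _, by omega, ?_⟩
    by_cases ha : a ∈ X
    · rw [singleton_inter_of_mem ha, card_singleton] at hle
      omega
    · rw [singleton_inter_of_notMem ha, card_empty] at hle
      simp only [ha, not_false_eq_true, true_and]
      omega
  · have hle := edgesWithin_contractPair_le_of_notMem G huv hu
    have := hsp _ (hB ▸ hY3)
    omega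

theorem stmt16 (G : SimpleGraph V) [DecidableRel G.Adj] (hsp : Sparse3 G)
    (u v a : V) (huv : u ≠ v) (hnadj : ¬ G.Adj u v)
    (hcn : commonNbrs G u v = {a})
    (hnot : ¬ Sparse3 (contractPair G u v)) :
    ∃ X : Finset V, u ∈ X ∧ v ∈ X ∧ 6 ≤ X.card ∧
      (edgesWithin G X + 6 = 3 * X.card ∨
       edgesWithin G X + 7 = 3 * X.card ∨
       (a ∉ X ∧ edgesWithin G X + 8 = 3 * X.card)) :=
  stmt16_general G hsp u v a huv hcn hnot
end
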